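/- arXiv:1612.06039 — 5 statements merged into one kernel-verified Lean document; each statement's English description precedes it below -/
import Mathlib

section
/- The invariant ring of the 2-dimensional orthogonal group O_2^+(F_q) acting on F_q[x,y] (the group generated by the swap σ: x↔y and the scalings τ_a: x↦a^{-1}x, y↦ay for a ∈ F_q^×) equals the polynomial subalgebra F_q[xy, x^{q-1}+y^{q-1}]. -/
/-!
The scaling `τ_a` multiplies `x^i y^j` by `a^(j-i)`, and `F^×` is cyclic of order `q - 1`, so a
`τ`-invariant polynomial only involves monomials with `i ≡ j [MOD q - 1]`. Being also
swap-invariant, it is a combination of the diagonal monomials `(xy)^i` and of the pairs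
`x^i y^j + x^j y^i` with `i < j` (grouping a monomial with its mirror image, rather than
averaging, is what works in characteristic 2). Such a pair equals
`(xy)^i (x^(k(q-1)) + y^(k(q-1)))`, and the power sums `u^k + v^k` lie in `F[uv, u + v]` by
Newton's recurrence. Conversely both generators are invariant because `a^(q-1) = 1`.
-/

open MvPolynomial

theorem IsCyclic.modEq_natCard_of_forall_pow_eq {G : Type*} [Group G] [IsCyclic G] {i j : ℕ}
    (h : ∀ g : G, g ^ i = g ^ j) : i ≡ j [MOD Nat.card G] := by
  obtain ⟨g, hg⟩ := IsCyclic.exists_ofOrder_eq_natCard (α := G)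
  exact hg ▸ pow_eq_pow_iff_modEq.mp (h g)

namespace Algebra

variable {R A : Type*} [CommRing R] [CommRing A] [Algebra R A]

theorem pow_add_pow_mem_adjoin (x y : A) (k : ℕ) :
    x ^ k + y ^ k ∈ adjoin R {x * y, x + y} := by
  have hxy : x * y ∈ adjoin R {x * y, x + y} := subset_adjoin (by simp)
  have hsum : x + y ∈ adjoin R {x * y, x + y} := subset_adjoin (by simp)
  induction k using Nat.twoStepInduction with
  | zero => simpa using add_mem (one_mem _) (one_mem _)
  | one => simpa using hsum
  | more k ih₀ ih₁ =>
    have newton : x ^ (k + 2) + y ^ (k + 2) =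
        (x + y) * (x ^ (k + 1) + y ^ (k + 1)) - x * y * (x ^ k + y ^ k) := by ring
    rw [newton]
    exact sub_mem (mul_mem hsum ih₁) (mul_mem hxy ih₀)

theorem pow_mul_pow_add_pow_mul_pow_mem_adjoin (x y : A) {m i j : ℕ} (h : i ≡ j [MOD m]) :
    x ^ i * y ^ j + x ^ j * y ^ i ∈ adjoin R {x * y, x ^ m + y ^ m} := by
  wlog hij : i ≤ j generalizing i j
  · simpa only [add_comm] using this h.symm (by omega)
  obtain ⟨t, rfl⟩ := Nat.exists_eq_add_of_le hij
  obtain ⟨k, hk⟩ := (Nat.modEq_iff_dvd' hij).mp h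
  rw [Nat.add_sub_cancel_left] at hk
  subst hk
  have hxy : x * y ∈ adjoin R {x * y, x ^ m + y ^ m} := subset_adjoin (by simp)
  have hpow : (x ^ m) ^ k + (y ^ m) ^ k ∈ adjoin R {x * y, x ^ m + y ^ m} := by
    refine adjoin_le ?_ (pow_add_pow_mem_adjoin (x ^ m) (y ^ m) k)
    rintro _ (rfl | rfl)
    · exact mul_pow x y m ▸ pow_mem hxy m
    · exact subset_adjoin (by simp)
  have hfactor : x ^ i * y ^ (i + m * k) + x ^ (i + m * k) * y ^ i =
      (x * y) ^ i * ((x ^ m) ^ k + (y ^ m) ^ k) := by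
    ring
  rw [hfactor]
  exact mul_mem (pow_mem hxy i) hpow

end Algebra

namespace MvPolynomial

section CommSemiring

variable {σ R : Type*} [CommSemiring R]

theorem aeval_C_mul_X_monomial (w : σ → R) (d : σ →₀ ℕ) (r : R) :
    aeval (fun i => C (w i) * X i) (monomial d r) =
      monomial d ((d.prod fun i k => w i ^ k) * r) := by
  rw [aeval_monomial, monomial_eq, algebraMap_eq]
  simp only [mul_pow, Finsupp.prod_mul, ← map_pow, map_finsuppProd, map_mul]
  ring

theorem coeff_aeval_C_mul_X (w : σ → R) (f : MvPolynomial σ R) (d : σ →₀ ℕ) :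
    coeff d (aeval (fun i => C (w i) * X i) f) = (d.prod fun i k => w i ^ k) * coeff d f := by
  classical
  induction f using MvPolynomial.induction_on' with
  | monomial u r =>
    rw [aeval_C_mul_X_monomial, coeff_monomial, coeff_monomial]
    split_ifs with h
    · rw [h]
    · rw [mul_zero]
  | add p q hp hq => rw [map_add, coeff_add, coeff_add, hp, hq, mul_add]

theorem coeff_sum_monomial_coeff_filter (p : (σ →₀ ℕ) → Prop) [DecidablePred p]
    (f : MvPolynomial σ R) (e : σ →₀ ℕ) :
    coeff e (∑ d ∈ f.support with p d, monomial d (coeff d f)) =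
      if p e then coeff e f else 0 := by
  classical
  simp only [coeff_sum, coeff_monomial, Finset.sum_ite_eq', Finset.mem_filter, mem_support_iff]
  split_ifs <;> simp_all

theorem coeff_rename_equiv {τ : Type*} (e : σ ≃ τ) (f : MvPolynomial σ R) (d : τ →₀ ℕ) :
    coeff d (rename e f) = coeff (d.equivMapDomain e.symm) f := by
  rw [← coeff_rename_mapDomain e e.injective f, Finsupp.equivMapDomain_eq_mapDomain,
    ← Finsupp.mapDomain_comp, e.self_comp_symm, Finsupp.mapDomain_id]

end CommSemiring

theorem mem_adjoin_of_rename_swap_eq {R : Type*} [CommRing R] {m : ℕ}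
    {f : MvPolynomial (Fin 2) R} (hswap : rename (Equiv.swap 0 1) f = f)
    (hmod : ∀ d ∈ f.support, d 0 ≡ d 1 [MOD m]) :
    f ∈ Algebra.adjoin R {X 0 * X 1, X 0 ^ m + X 1 ^ m} := by
  set L := ∑ d ∈ f.support with d 0 < d 1, monomial d (coeff d f)
  set D := ∑ d ∈ f.support with d 0 = d 1, monomial d (coeff d f)
  have hdecomp : f = L + rename (Equiv.swap 0 1) L + D := by
    ext e
    have hsymm := congrArg (coeff e) hswap
    simp only [coeff_rename_equiv, Equiv.symm_swap] at hsymm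
    simp only [L, D, coeff_add, coeff_rename_equiv, coeff_sum_monomial_coeff_filter, hsymm,
      Equiv.symm_swap, Finsupp.equivMapDomain_apply, Equiv.swap_apply_left,
      Equiv.swap_apply_right]
    rcases lt_trichotomy (e 0) (e 1) with h | h | h
    · simp [h, h.ne, h.not_gt]
    · simp [h]
    · simp [h, h.ne', h.not_gt]
  have hxy : (X 0 * X 1 : MvPolynomial (Fin 2) R) ∈
      Algebra.adjoin R {X 0 * X 1, X 0 ^ m + X 1 ^ m} :=
    Algebra.subset_adjoin (by simp)
  rw [hdecomp, map_sum, ← Finset.sum_add_distrib]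
  refine add_mem (sum_mem fun d hd => ?_) (sum_mem fun d hd => ?_)
  · rw [Finset.mem_filter] at hd
    convert mul_mem (Subalgebra.algebraMap_mem _ (coeff d f))
      (Algebra.pow_mul_pow_add_pow_mul_pow_mem_adjoin (R := R)
        (X 0 : MvPolynomial (Fin 2) R) (X 1) (hmod d hd.1)) using 1
    simp only [monomial_fin_two, map_mul, algHom_C, algebraMap_eq, map_pow, rename_X,
      Equiv.swap_apply_left, Equiv.swap_apply_right]
    ring
  · rw [Finset.mem_filter] at hd
    rw [monomial_fin_two, hd.2, mul_assoc, ← mul_pow]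
    exact mul_mem (Subalgebra.algebraMap_mem _ _) (pow_mem hxy _)

theorem modEq_of_mem_support_of_forall_aeval_eq {F : Type*} [Field F] [Fintype F]
    {f : MvPolynomial (Fin 2) F}
    (h : ∀ a : Fˣ, aeval ![C (a : F)⁻¹ * X 0, C (a : F) * X 1] f = f) {d : Fin 2 →₀ ℕ}
    (hd : d ∈ f.support) : d 0 ≡ d 1 [MOD Fintype.card F - 1] := by
  rw [← Nat.card_eq_fintype_card, ← Nat.card_units]
  refine IsCyclic.modEq_natCard_of_forall_pow_eq fun a => Units.ext ?_
  have hscale : ![C (a : F)⁻¹ * X 0, C (a : F) * X 1] =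
      fun i => C (![(a : F)⁻¹, a] i) * X i := by
    funext i; fin_cases i <;> rfl
  have hcoeff := congrArg (coeff d) (h a)
  rw [hscale, coeff_aeval_C_mul_X, Finsupp.prod_fintype _ _ fun _ => pow_zero _,
    Fin.prod_univ_two, mul_eq_right₀ (mem_support_iff.mp hd)] at hcoeff
  simp only [Matrix.cons_val_zero, Matrix.cons_val_one, inv_pow] at hcoeff
  exact_mod_cast (inv_mul_eq_one₀ (pow_ne_zero _ a.ne_zero)).mp hcoeff

end MvPolynomial

theorem invariant_ring_one_vector_general (F : Type*) [Field F] [Fintype F]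
    (f : MvPolynomial (Fin 2) F) :
    (aeval (R := F) ![X 1, X 0] f = f ∧
        ∀ a : Fˣ, aeval (R := F) ![C ((a : F)⁻¹) * X 0, C ((a : F)) * X 1] f = f) ↔
      f ∈ Algebra.adjoin F
        ({X 0 * X 1,
          X 0 ^ (Fintype.card F - 1) + X 1 ^ (Fintype.card F - 1)} :
            Set (MvPolynomial (Fin 2) F)) := by
  have hswap : aeval (R := F) ![X 1, X 0] = rename (Equiv.swap (0 : Fin 2) 1) := by
    refine algHom_ext fun i => ?_
    fin_cases i <;> simp
  constructor
  · rintro ⟨hσ, hτ⟩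
    exact mem_adjoin_of_rename_swap_eq (hswap ▸ hσ) fun d hd =>
      modEq_of_mem_support_of_forall_aeval_eq hτ hd
  · intro hf
    have hunit : ∀ a : Fˣ, (a : F) ^ (Fintype.card F - 1) = 1 := fun a =>
      FiniteField.pow_card_sub_one_eq_one _ a.ne_zero
    refine ⟨(AlgHom.eqOn_adjoin_iff (ψ := AlgHom.id F _)).mpr ?_ hf,
      fun a => (AlgHom.eqOn_adjoin_iff (ψ := AlgHom.id F _)).mpr ?_ hf⟩
    · rintro _ (rfl | rfl)
      · simp [mul_comm]
      · simp [add_comm]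
    · rintro _ (rfl | rfl)
      · simp only [map_mul, aeval_X, AlgHom.id_apply, Matrix.cons_val_zero, Matrix.cons_val_one]
        rw [mul_mul_mul_comm, ← C_mul, inv_mul_cancel₀ a.ne_zero, C_1, one_mul]
      · simp [mul_pow, ← C_pow, hunit]

/-- Over a finite field of characteristic 2 (`q = 2^s`, `s ≥ 2`), a polynomial
`f ∈ F_q[x,y]` is invariant under `O₂⁺(F_q)` (the group generated by the swap
`σ : x ↔ y` and the scalings `τ_a : x ↦ a⁻¹x, y ↦ ay`, `a ∈ F_q^×`) if and only if
`f` lies in the subalgebra `F_q[xy, x^{q-1} + y^{q-1}]`.  Here `x = X 0`, `y = X 1`. -/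
theorem invariant_ring_one_vector (F : Type*) [Field F] [Fintype F] [DecidableEq F]
    (hchar : ringChar F = 2) (h4 : 4 ≤ Fintype.card F) (f : MvPolynomial (Fin 2) F) :
    (aeval (R := F) ![X 1, X 0] f = f ∧
        ∀ a : Fˣ, aeval (R := F) ![C ((a : F)⁻¹) * X 0, C ((a : F)) * X 1] f = f) ↔
      f ∈ Algebra.adjoin F
        ({X 0 * X 1,
          X 0 ^ (Fintype.card F - 1) + X 1 ^ (Fintype.card F - 1)} :
            Set (MvPolynomial (Fin 2) F)) :=
  invariant_ring_one_vector_general F f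
end

section
/- Let F be a field, W a faithful finite-dimensional representation of a finite group G, H ≤ G a proper subgroup with [G:H] invertible in F, and f_1,…,f_m homogeneous elements of F[W]^G of positive degree. Let A = F[f_1,…,f_m] and 𝒥 the ideal generated by f_1,…,f_m in F[W]^H. Let R = (1/[G:H])·Tr_H^G : F[W]^H → F[W]^G be the relative Reynolds operator. Suppose Δ ∪ {1} is a homogeneous generating set of F[W]^H as an A-module with δ ∉ A for each δ ∈ Δ. If R(δ) ∈ 𝒥 for all δ ∈ Δ, then F[W]^G = A. -/
/-!
A `G`-invariant `p` is in particular `H`-invariant, so `p = a + ∑ aᵢ δᵢ` with `a, aᵢ ∈ A`.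
The Reynolds operator `R` fixes `F[W]^G` and is `F[W]^G`-linear, so `p = R p = a + ∑ aᵢ R(δᵢ)`;
moreover it turns an `F[W]^H`-combination of the `fⱼ` into an `F[W]^G`-combination, and
`R δ = R (R δ)`. Hence `F[W]^G = A + ∑ⱼ F[W]^G fⱼ`. Since `F[W]^G` is a graded subalgebra and the
`fⱼ` are homogeneous of positive degree, induction on the degree (graded Nakayama) gives
`F[W]^G = A`.
-/

section Invariants

variable {F S G : Type*} [CommSemiring F] [Semiring S] [Algebra F S] [Group G]
  (ρ : G →* S ≃ₐ[F] S)

def invariants (K : Subgroup G) : Subalgebra F S where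
  carrier := {p | ∀ g ∈ K, ρ g p = p}
  mul_mem' hp hq g hg := by rw [map_mul, hp g hg, hq g hg]
  add_mem' hp hq g hg := by rw [map_add, hp g hg, hq g hg]
  algebraMap_mem' r g _ := AlgEquiv.commutes _ r

variable {ρ}

theorem mem_invariants {K : Subgroup G} {p : S} : p ∈ invariants ρ K ↔ ∀ g ∈ K, ρ g p = p :=
  Iff.rfl

theorem invariants_antitone : Antitone (invariants ρ) :=
  fun _ _ hKL _ hp g hg ↦ hp g (hKL hg)

theorem apply_out_mk_of_mem_invariants {H : Subgroup G} {p : S} (hp : p ∈ invariants ρ H) (g : G) :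
    ρ (g : G ⧸ H).out p = ρ g p := by
  obtain ⟨h, hh⟩ := QuotientGroup.mk_out_eq_mul H g
  rw [hh, map_mul, AlgEquiv.mul_apply, hp h h.2]

end Invariants

section Transfer

variable {F S G : Type*} [CommSemiring F] [CommSemiring S] [Algebra F S] [Group G]
  (ρ : G →* S ≃ₐ[F] S) (H : Subgroup G) [Fintype (G ⧸ H)]

noncomputable def relTransfer : S →ₗ[F] S := ∑ c : G ⧸ H, (ρ c.out).toLinearMap

variable {ρ H}

theorem relTransfer_apply (p : S) : relTransfer ρ H p = ∑ c : G ⧸ H, ρ c.out p := by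
  simp [relTransfer]

theorem relTransfer_mem_invariants_top {p : S} (hp : p ∈ invariants ρ H) :
    relTransfer ρ H p ∈ invariants ρ ⊤ := by
  intro g _
  rw [relTransfer_apply, map_sum]
  calc ∑ c : G ⧸ H, ρ g (ρ c.out p) = ∑ c : G ⧸ H, ρ (g • c).out p := by
        refine Finset.sum_congr rfl fun c _ ↦ ?_
        rw [← AlgEquiv.mul_apply, ← map_mul, ← apply_out_mk_of_mem_invariants hp,
          ← smul_eq_mul, ← MulAction.Quotient.smul_coe, QuotientGroup.out_eq']
    _ = ∑ c : G ⧸ H, ρ c.out p := Equiv.sum_comp (MulAction.toPerm g) (fun c : G ⧸ H ↦ ρ c.out p)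

theorem relTransfer_of_mem_invariants_top {p : S} (hp : p ∈ invariants ρ ⊤) :
    relTransfer ρ H p = H.index • p := by
  rw [relTransfer_apply, Finset.sum_congr rfl fun c _ ↦ hp c.out trivial, Finset.sum_const,
    Finset.card_univ, ← Nat.card_eq_fintype_card, Subgroup.index_eq_card]

theorem relTransfer_mul_of_mem_invariants_top {q : S} (hq : q ∈ invariants ρ ⊤) (p : S) :
    relTransfer ρ H (q * p) = q * relTransfer ρ H p := by
  simp only [relTransfer_apply, map_mul, hq _ trivial, Finset.mul_sum]

end Transfer

section Reynolds

variable {F S G : Type*} [Semifield F] [CommSemiring S] [Algebra F S] [Group G]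
  (ρ : G →* S ≃ₐ[F] S) (H : Subgroup G) [Fintype (G ⧸ H)]

noncomputable def reynolds : S →ₗ[F] S := (H.index : F)⁻¹ • relTransfer ρ H

variable {ρ H}

theorem reynolds_mem_invariants_top {p : S} (hp : p ∈ invariants ρ H) :
    reynolds ρ H p ∈ invariants ρ ⊤ :=
  Subalgebra.smul_mem _ (relTransfer_mem_invariants_top hp) _

theorem reynolds_of_mem_invariants_top (hH : (H.index : F) ≠ 0) {p : S}
    (hp : p ∈ invariants ρ ⊤) : reynolds ρ H p = p := by
  rw [reynolds, LinearMap.smul_apply, relTransfer_of_mem_invariants_top hp,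
    ← Nat.cast_smul_eq_nsmul F, smul_smul, inv_mul_cancel₀ hH, one_smul]

theorem reynolds_mul_of_mem_invariants_top {q : S} (hq : q ∈ invariants ρ ⊤) (p : S) :
    reynolds ρ H (q * p) = q * reynolds ρ H p := by
  rw [reynolds, LinearMap.smul_apply, LinearMap.smul_apply,
    relTransfer_mul_of_mem_invariants_top hq, mul_smul_comm]

theorem reynolds_mem_span_of_mem_span {ι : Type*} {f : ι → S} (hf : ∀ j, f j ∈ invariants ρ ⊤)
    {x : S} (hx : x ∈ Submodule.span (invariants ρ H) (Set.range f)) :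
    reynolds ρ H x ∈ Submodule.span (invariants ρ ⊤) (Set.range f) := by
  suffices ∀ c ∈ invariants ρ H,
      reynolds ρ H (c * x) ∈ Submodule.span (invariants ρ ⊤) (Set.range f) by
    simpa using this 1 (one_mem _)
  induction hx using Submodule.span_induction with
  | mem y hy =>
    obtain ⟨j, rfl⟩ := hy
    intro c hc
    rw [mul_comm, reynolds_mul_of_mem_invariants_top (hf j), mul_comm]
    exact Submodule.smul_mem _ (⟨_, reynolds_mem_invariants_top hc⟩ : invariants ρ ⊤)
      (Submodule.subset_span ⟨j, rfl⟩)
  | zero => simp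
  | add y z _ _ hy hz =>
    intro c hc
    rw [mul_add, map_add]
    exact add_mem (hy c hc) (hz c hc)
  | smul b y _ hy =>
    intro c hc
    rw [Subalgebra.smul_def, smul_eq_mul, ← mul_assoc]
    exact hy _ (mul_mem hc b.2)

theorem exists_mem_add_mem_span_of_reynolds_mem_span (hH : (H.index : F) ≠ 0)
    {A : Subalgebra F S} (hA : A ≤ invariants ρ ⊤) {Δ : Set S} (hΔ : Δ ⊆ invariants ρ H)
    (hgen : ∀ p ∈ invariants ρ H, p ∈ Submodule.span A (insert 1 Δ))
    {ι : Type*} {f : ι → S} (hf : ∀ j, f j ∈ invariants ρ ⊤)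
    (hRΔ : ∀ δ ∈ Δ, reynolds ρ H δ ∈ Submodule.span (invariants ρ H) (Set.range f))
    {p : S} (hp : p ∈ invariants ρ ⊤) :
    ∃ a ∈ A, ∃ q ∈ Submodule.span (invariants ρ ⊤) (Set.range f), p = a + q := by
  have hspan : ∀ z ∈ Submodule.span A Δ,
      reynolds ρ H z ∈ Submodule.span (invariants ρ ⊤) (Set.range f) := by
    intro z hz
    induction hz using Submodule.span_induction with
    | mem δ hδ =>
      -- `R δ` is `G`-invariant, so `R δ = R (R δ)`
      rw [← reynolds_of_mem_invariants_top hH (reynolds_mem_invariants_top (hΔ hδ))]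
      exact reynolds_mem_span_of_mem_span hf (hRΔ δ hδ)
    | zero => simp
    | add y z _ _ hy hz => rw [map_add]; exact add_mem hy hz
    | smul a z _ hz =>
      rw [Subalgebra.smul_def, smul_eq_mul, reynolds_mul_of_mem_invariants_top (hA a.2)]
      exact Submodule.smul_mem _ (⟨a, hA a.2⟩ : invariants ρ ⊤) hz
  obtain ⟨a, z, hz, hpz⟩ := Submodule.mem_span_insert.1 (hgen p (invariants_antitone le_top hp))
  refine ⟨a, a.2, reynolds ρ H z, hspan z hz, ?_⟩
  rw [← reynolds_of_mem_invariants_top hH hp, hpz, map_add, Subalgebra.smul_def, smul_eq_mul,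
    mul_one, reynolds_of_mem_invariants_top hH (hA a.2)]

end Reynolds

section Graded

open DirectSum

variable {R S : Type*} [CommSemiring R] [CommSemiring S] [Algebra R S]
  (𝒜 : ℕ → Submodule R S) [GradedAlgebra 𝒜]

theorem isHomogeneous_adjoin {s : Set S} (hs : ∀ x ∈ s, SetLike.IsHomogeneousElem 𝒜 x) :
    SetLike.IsHomogeneous 𝒜 (Algebra.adjoin R s) := by
  have hclosure := IsHomogeneous.subsemiringClosure_of_isHomogeneousElem (𝒜 := 𝒜)
    (s := Set.range (algebraMap R S) ∪ s) <| by
      rintro x (⟨r, rfl⟩ | hx)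
      · exact ⟨0, SetLike.algebraMap_mem_graded 𝒜 r⟩
      · exact hs x hx
  rwa [← Algebra.adjoin_toSubsemiring] at hclosure

theorem isHomogeneous_invariants {G : Type*} [Group G] {ρ : G →* S ≃ₐ[R] S}
    (hρ : ∀ g i x, x ∈ 𝒜 i → ρ g x ∈ 𝒜 i) (K : Subgroup G) :
    SetLike.IsHomogeneous 𝒜 (invariants ρ K) := by
  intro i x hx g hg
  let ρg : 𝒜 →ₐᵍ[R] 𝒜 := { (ρ g : S →ₐ[R] S) with map_mem := hρ g _ _ }
  exact (map_directSumDecompose 𝒜 𝒜 ρg).trans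
    (congrArg (fun y ↦ (decompose 𝒜 y i : S)) (hx g hg))

theorem le_adjoin_of_forall_mem_adjoin_add_span {B : Subalgebra R S}
    (hB : SetLike.IsHomogeneous 𝒜 B)
    {ι : Type*} [Fintype ι] (f : ι → S) (hf : ∀ j, ∃ e, 0 < e ∧ f j ∈ 𝒜 e)
    (h : ∀ p ∈ B, ∃ a ∈ Algebra.adjoin R (Set.range f), ∃ q ∈ Submodule.span B (Set.range f),
      p = a + q) :
    B ≤ Algebra.adjoin R (Set.range f) := by
  classical
  set A := Algebra.adjoin R (Set.range f)
  have hA : SetLike.IsHomogeneous 𝒜 A := isHomogeneous_adjoin 𝒜 <| by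
    rintro _ ⟨j, rfl⟩
    exact (hf j).imp fun _ ↦ And.right
  have hfA (j : ι) : f j ∈ A := Algebra.subset_adjoin ⟨j, rfl⟩
  have homogeneous_mem : ∀ d, ∀ p ∈ B, p ∈ 𝒜 d → p ∈ A := by
    intro d
    induction d using Nat.strong_induction_on with
    | _ d ih =>
    intro p hpB hpd
    obtain ⟨a, ha, q, hq, rfl⟩ := h p hpB
    obtain ⟨c, rfl⟩ := (Submodule.mem_span_range_iff_exists_fun B).1 hq
    rw [← decompose_of_mem_same 𝒜 hpd, decompose_add, DirectSum.add_apply, Submodule.coe_add,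
      decompose_sum, DFinsupp.finsetSum_apply, Submodule.coe_sum]
    refine add_mem (hA d ha) (sum_mem fun j _ ↦ ?_)
    obtain ⟨e, he, hfj⟩ := hf j
    rw [Subalgebra.smul_def, smul_eq_mul, coe_decompose_mul_of_right_mem 𝒜 d hfj]
    split_ifs with hed
    · exact mul_mem (ih _ (by omega) _ (hB _ (c j).2) (Submodule.coe_mem _)) (hfA j)
    · exact zero_mem A
  intro p hp
  rw [AddSubmonoidClass.IsHomogeneous.mem_iff 𝒜 A hA]
  exact fun i ↦ homogeneous_mem i _ (hB i hp) (Submodule.coe_mem _)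

end Graded

open MvPolynomial

theorem reynolds_criterion_general (F : Type*) [Field F] (n : ℕ)
    (G : Type*) [Group G] [Fintype G]
    (ρ : G →* (MvPolynomial (Fin n) F ≃ₐ[F] MvPolynomial (Fin n) F))
    (hdeg : ∀ (g : G) (d : ℕ) (f : MvPolynomial (Fin n) F),
      f.IsHomogeneous d → (ρ g f).IsHomogeneous d)
    (H : Subgroup G) [DecidablePred (· ∈ H)]
    (hindex : (H.index : F) ≠ 0)
    (invG invH : Subalgebra F (MvPolynomial (Fin n) F))
    (hinvG : ∀ f, f ∈ invG ↔ ∀ g : G, ρ g f = f)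
    (hinvH : ∀ f, f ∈ invH ↔ ∀ g ∈ H, ρ g f = f)
    (m : ℕ) (f : Fin m → MvPolynomial (Fin n) F)
    (hfG : ∀ i, f i ∈ invG)
    (hfhom : ∀ i, ∃ d : ℕ, 0 < d ∧ (f i).IsHomogeneous d)
    (A : Subalgebra F (MvPolynomial (Fin n) F))
    (hA : A = Algebra.adjoin F (Set.range f))
    (R : MvPolynomial (Fin n) F → MvPolynomial (Fin n) F)
    (hR : ∀ p, R p = (H.index : F)⁻¹ • ∑ c : G ⧸ H, ρ (Quotient.out c) p)
    (Δ : Set (MvPolynomial (Fin n) F))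
    (hΔH : ∀ δ ∈ Δ, δ ∈ invH)
    (hgen : ∀ p ∈ invH, p ∈ Submodule.span A (insert 1 Δ))
    (hRΔ : ∀ δ ∈ Δ, R δ ∈ Submodule.span invH (Set.range f)) :
    invG = A := by
  obtain rfl : invG = invariants ρ ⊤ := SetLike.ext fun p ↦ by simp [hinvG, mem_invariants]
  obtain rfl : invH = invariants ρ H := SetLike.ext fun p ↦ hinvH p
  obtain rfl : R = reynolds ρ H := funext fun p ↦ by
    rw [hR, reynolds, LinearMap.smul_apply, relTransfer_apply]
  subst hA
  have hAG : Algebra.adjoin F (Set.range f) ≤ invariants ρ ⊤ :=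
    Algebra.adjoin_le (Set.range_subset_iff.2 hfG)
  let _ := MvPolynomial.gradedAlgebra (σ := Fin n) (R := F)
  refine le_antisymm ?_ hAG
  exact le_adjoin_of_forall_mem_adjoin_add_span (homogeneousSubmodule (Fin n) F)
    (isHomogeneous_invariants _ hdeg ⊤) f hfhom fun p hp ↦
      exists_mem_add_mem_span_of_reynolds_mem_span hindex hAG hΔH hgen hfG hRΔ hp

/-- Relative Reynolds operator criterion (Lemma 3.1): let `G` be a finite group
acting faithfully and degree-preservingly on `F[W] = F[x₁,…,xₙ]` by `F`-algebra
automorphisms, `H ≤ G` a proper subgroup with index invertible in `F`, and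
`f₁,…,f_m` homogeneous `G`-invariants of positive degree, `A = F[f₁,…,f_m]` and
`𝒥` the ideal they generate in `F[W]^H`.  If `Δ ∪ {1}` is a homogeneous
generating set of `F[W]^H` as an `A`-module with `δ ∉ A` for all `δ ∈ Δ`, and the
Reynolds operator `R = [G:H]⁻¹·Tr_H^G` sends every `δ ∈ Δ` into `𝒥`, then
`F[W]^G = A`. -/
theorem reynolds_criterion (F : Type*) [Field F] (n : ℕ)
    (G : Type*) [Group G] [Fintype G] [DecidableEq G]
    (ρ : G →* (MvPolynomial (Fin n) F ≃ₐ[F] MvPolynomial (Fin n) F))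
    (hfaithful : Function.Injective ρ)
    (hdeg : ∀ (g : G) (d : ℕ) (f : MvPolynomial (Fin n) F),
      f.IsHomogeneous d → (ρ g f).IsHomogeneous d)
    (H : Subgroup G) [DecidablePred (· ∈ H)] (hproper : H ≠ ⊤)
    (hindex : (H.index : F) ≠ 0)
    (invG invH : Subalgebra F (MvPolynomial (Fin n) F))
    (hinvG : ∀ f, f ∈ invG ↔ ∀ g : G, ρ g f = f)
    (hinvH : ∀ f, f ∈ invH ↔ ∀ g ∈ H, ρ g f = f)
    (m : ℕ) (f : Fin m → MvPolynomial (Fin n) F)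
    (hfG : ∀ i, f i ∈ invG)
    (hfhom : ∀ i, ∃ d : ℕ, 0 < d ∧ (f i).IsHomogeneous d)
    (A : Subalgebra F (MvPolynomial (Fin n) F))
    (hA : A = Algebra.adjoin F (Set.range f))
    (R : MvPolynomial (Fin n) F → MvPolynomial (Fin n) F)
    (hR : ∀ p, R p = (H.index : F)⁻¹ • ∑ c : G ⧸ H, ρ (Quotient.out c) p)
    (Δ : Set (MvPolynomial (Fin n) F))
    (hΔH : ∀ δ ∈ Δ, δ ∈ invH)
    (hΔhom : ∀ δ ∈ Δ, ∃ d : ℕ, δ.IsHomogeneous d)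
    (hΔnotA : ∀ δ ∈ Δ, δ ∉ A)
    (hgen : ∀ p ∈ invH, p ∈ Submodule.span A (insert 1 Δ))
    (hRΔ : ∀ δ ∈ Δ, R δ ∈ Submodule.span invH (Set.range f)) :
    invG = A :=
  reynolds_criterion_general F n G ρ hdeg H hindex invG invH hinvG hinvH m f hfG hfhom A hA R hR Δ
    hΔH hgen hRΔ
end

section
/- In F_q[x_1,x_2,y_1,y_2] with char(F_q)=2, for 1 ≤ k ≤ i ≤ q-2 with k+i < q-1, the identity B_k·B_i = B_{k+i}·B_0 + N_2^{q-1-k-i}·v_{k+i} + N_1^k N_2^{q-1-i}·v_{i-k} holds, where B_j = x_1^j x_2^{q-1-j} + y_1^j y_2^{q-1-j}, N_1 = x_1y_1, N_2 = x_2y_2, and v_n = y_1^n x_2^n + x_1^n y_2^n. -/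
open MvPolynomial

/-- In `F_q[x₁,x₂,y₁,y₂]` with `char F_q = 2`, for `1 ≤ k ≤ i ≤ q-2` with `k+i < q-1`:
`B_k·B_i = B_{k+i}·B_0 + N₂^{q-1-k-i}·v_{k+i} + N₁^k N₂^{q-1-i}·v_{i-k}`, where
`B_j = x₁^j x₂^{q-1-j} + y₁^j y₂^{q-1-j}`, `N₁ = x₁y₁`, `N₂ = x₂y₂`,
`v_n = y₁ⁿx₂ⁿ + x₁ⁿy₂ⁿ`, and `x₁ = X 0`, `x₂ = X 1`, `y₁ = X 2`, `y₂ = X 3`. -/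
theorem Bk_mul_Bi (F : Type*) [Field F] [Fintype F] (hchar : ringChar F = 2)
    (q : ℕ) (hq : q = Fintype.card F)
    (B : ℕ → MvPolynomial (Fin 4) F)
    (hB : ∀ j, B j = X 0 ^ j * X 1 ^ (q - 1 - j) + X 2 ^ j * X 3 ^ (q - 1 - j))
    (v : ℕ → MvPolynomial (Fin 4) F)
    (hv : ∀ n, v n = X 2 ^ n * X 1 ^ n + X 0 ^ n * X 3 ^ n)
    (k i : ℕ) (hk : 1 ≤ k) (hki : k ≤ i) (hi : i ≤ q - 2) (hsum : k + i < q - 1) :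
    B k * B i =
      B (k + i) * B 0 + (X 1 * X 3) ^ (q - 1 - k - i) * v (k + i) +
        (X 0 * X 2) ^ k * (X 1 * X 3) ^ (q - 1 - i) * v (i - k) := by
  haveI : CharP F 2 := hchar ▸ ringChar.charP F
  have h2 : (2 : MvPolynomial (Fin 4) F) = 0 := by
    have : ((2 : ℕ) : MvPolynomial (Fin 4) F) = 0 := CharP.cast_eq_zero _ 2
    simpa using this
  obtain ⟨d, rfl⟩ : ∃ d, i = k + d := ⟨i - k, by omega⟩
  obtain ⟨a, haq⟩ : ∃ a, q - 1 = k + (k + d) + a := ⟨q - 1 - k - (k + d), by omega⟩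
  have e1 : q - 1 - k = k + d + a := by omega
  have e2 : q - 1 - (k + d) = k + a := by omega
  have e3 : q - 1 - (k + (k + d)) = a := by omega
  have e4 : q - 1 - 0 = k + (k + d) + a := by omega
  have e5 : q - 1 - k - (k + d) = a := by omega
  have e6 : k + d - k = d := by omega
  have e7 : k + d + a - (k + d) = a := by omega
  simp only [hB, hv, e1, e2, e3, e4, e5, e6, e7]
  simp only [pow_add]
  linear_combination (-(X 0 ^ k * X 0 ^ k * X 0 ^ d * X 1 ^ a * X 3 ^ k * X 3 ^ k * X 3 ^ d * X 3 ^ a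
    + X 2 ^ k * X 2 ^ k * X 2 ^ d * X 3 ^ a * X 1 ^ k * X 1 ^ k * X 1 ^ d * X 1 ^ a) :
      MvPolynomial (Fin 4) F) * h2
end

section
/- Over a finite field F_q of characteristic 2 with q ≥ 4, the Noether number β_{mV}(O_2^+(F_q)) — the minimal degree d such that the vector invariant ring F_q[mV]^{O_2^+(F_q)} is generated by invariants of degree at most d — equals max{q-1, m} for every positive integer m. -/
/-!
Write `x_i = X (inl i)`, `y_i = X (inr i)`. The swap and the scalings act on monomials, so the
invariants are spanned by the monomials fixed by the swap (products of the `x_i y_i`) and by the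
orbit sums `o(d) = x^α y^β + x^β y^α` of the exponents `d = (α, β)` with `|α| ≡ |β| mod q - 1`
(the admissible ones).

Upper bound: `o(r + u) = o(r) o(u) - o(r + σu)` trades an orbit sum of degree `> max (q - 1) m`
for lower-degree ones and another orbit sum of the same degree. As the degree exceeds `m` and
`q - 1`, pigeonhole provides `u = x_i y_j` or a pure `x`-monomial `u` of degree `q - 1` for which,
in at most two steps, this orbit sum becomes divisible by some `x_i y_i`, hence is `x_i y_i` times
an orbit sum of lower degree.

Lower bound `q - 1`: invariants of degree `< q - 1` only involve monomials with `|α| = |β|`, hence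
so does the algebra they generate, which misses `x_1^(q-1) + y_1^(q-1)`.

Lower bound `m` (for `q - 1 ≤ m`, in characteristic 2): the functional `λ` summing the
coefficients of the monomials `x_S y_(Sᶜ)` with `i₀ ∈ S` satisfies
`λ(pq) = p(0) λ(q) + λ(p) q(0)` on swap-invariants and vanishes in degree `< m`, but `λ(o(d)) = 1`
for every multilinear `d` (one of `x_i`, `y_i` for each `i`), and since `q - 1` is odd some
multilinear `d` is admissible.
-/

open MvPolynomial

theorem MvPolynomial.aeval_C_mul_X_monomial_s17 {σ R : Type*} [CommSemiring R] (w : σ → R)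
    (d : σ →₀ ℕ) (c : R) :
    aeval (fun s => C (w s) * X s) (monomial d c) =
      monomial d (c * d.prod fun s k => w s ^ k) := by
  rw [aeval_monomial, algebraMap_eq, monomial_eq, C_mul]
  simp only [mul_pow, Finsupp.prod_mul, ← C_pow, ← map_finsuppProd]
  ring

theorem MvPolynomial.coeff_aeval_C_mul_X_s17 {σ R : Type*} [CommSemiring R] (w : σ → R)
    (f : MvPolynomial σ R) (d : σ →₀ ℕ) :
    coeff d (aeval (fun s => C (w s) * X s) f) = coeff d f * d.prod fun s k => w s ^ k := by
  classical
  induction f using MvPolynomial.induction_on' with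
  | monomial e c =>
    rw [aeval_C_mul_X_monomial_s17, coeff_monomial, coeff_monomial]
    split_ifs with h <;> simp [h]
  | add p q hp hq => simp only [map_add, coeff_add, hp, hq, add_mul]

theorem Nat.exists_lt_two_mul_modEq {n : ℕ} (hn : Odd n) (m : ℕ) :
    ∃ k < n, 2 * k ≡ m [MOD n] := by
  obtain ⟨r, rfl⟩ := hn
  refine ⟨m * (r + 1) % (2 * r + 1), Nat.mod_lt _ (by omega), ?_⟩
  calc 2 * (m * (r + 1) % (2 * r + 1)) ≡ 2 * (m * (r + 1)) [MOD 2 * r + 1] :=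
        (Nat.mod_modEq _ _).mul_left 2
    _ = m + m * (2 * r + 1) := by ring
    _ ≡ m [MOD 2 * r + 1] := Nat.add_mul_mod_self_right m m _

namespace O2Plus

variable {ι F : Type*}

section Exponents

def swapExp : (ι ⊕ ι →₀ ℕ) ≃+ (ι ⊕ ι →₀ ℕ) := Finsupp.domCongr (Equiv.sumComm ι ι)

@[simp] lemma swapExp_inl (d : ι ⊕ ι →₀ ℕ) (i : ι) : swapExp d (.inl i) = d (.inr i) := rfl

@[simp] lemma swapExp_inr (d : ι ⊕ ι →₀ ℕ) (i : ι) : swapExp d (.inr i) = d (.inl i) := rfl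

@[simp] lemma swapExp_swapExp (d : ι ⊕ ι →₀ ℕ) : swapExp (swapExp d) = d := by
  ext (_ | _) <;> rfl

lemma swapExp_eq_mapDomain (d : ι ⊕ ι →₀ ℕ) : swapExp d = d.mapDomain Sum.swap :=
  Finsupp.equivMapDomain_eq_mapDomain _ d

noncomputable def xyExp (i j : ι) : ι ⊕ ι →₀ ℕ :=
  Finsupp.single (.inl i) 1 + Finsupp.single (.inr j) 1

@[simp] lemma xyExp_inl [DecidableEq ι] (i j k : ι) :
    xyExp i j (.inl k) = if i = k then 1 else 0 := by
  simp [xyExp, Finsupp.single_apply]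

@[simp] lemma xyExp_inr [DecidableEq ι] (i j k : ι) :
    xyExp i j (.inr k) = if j = k then 1 else 0 := by
  simp [xyExp, Finsupp.single_apply]

@[simp] lemma swapExp_xyExp (i j : ι) : swapExp (xyExp i j) = xyExp j i := by
  classical
  ext (_ | _) <;> simp

lemma xyExp_le {d : ι ⊕ ι →₀ ℕ} {i j : ι} (hi : 1 ≤ d (.inl i)) (hj : 1 ≤ d (.inr j)) :
    xyExp i j ≤ d := by
  classical
  rintro (k | k) <;> simp only [xyExp_inl, xyExp_inr] <;> split_ifs <;> grind

def IsMultilinear (d : ι ⊕ ι →₀ ℕ) : Prop := ∀ i, d (.inl i) + d (.inr i) = 1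

lemma isMultilinear_add_swapExp_iff {d e : ι ⊕ ι →₀ ℕ} :
    IsMultilinear (d + swapExp e) ↔ IsMultilinear (d + e) := by
  simp only [IsMultilinear, Finsupp.add_apply, swapExp_inl, swapExp_inr]
  exact forall_congr' fun i => by omega

lemma not_le_of_isMultilinear {d e : ι ⊕ ι →₀ ℕ} {i : ι} (hx : 1 ≤ d (.inl i))
    (hy : 1 ≤ d (.inr i)) (he : IsMultilinear e) : ¬ d ≤ e := fun h => by
  have := he i
  have := h (.inl i)
  have := h (.inr i)
  omega

variable [Fintype ι]

instance : DecidablePred (IsMultilinear (ι := ι)) := fun _ => Fintype.decidableForallFintype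

def xDeg (d : ι ⊕ ι →₀ ℕ) : ℕ := ∑ i, d (.inl i)

def yDeg (d : ι ⊕ ι →₀ ℕ) : ℕ := ∑ i, d (.inr i)

@[simp] lemma xDeg_add (d e : ι ⊕ ι →₀ ℕ) : xDeg (d + e) = xDeg d + xDeg e := by
  simp [xDeg, Finset.sum_add_distrib]

@[simp] lemma yDeg_add (d e : ι ⊕ ι →₀ ℕ) : yDeg (d + e) = yDeg d + yDeg e := by
  simp [yDeg, Finset.sum_add_distrib]

@[simp] lemma xDeg_swapExp (d : ι ⊕ ι →₀ ℕ) : xDeg (swapExp d) = yDeg d := rfl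

@[simp] lemma yDeg_swapExp (d : ι ⊕ ι →₀ ℕ) : yDeg (swapExp d) = xDeg d := rfl

@[simp] lemma xDeg_single_inl [DecidableEq ι] (i : ι) (k : ℕ) :
    xDeg (Finsupp.single (.inl i) k : ι ⊕ ι →₀ ℕ) = k := by
  simp [xDeg, Finsupp.single_apply]

@[simp] lemma yDeg_single_inl (i : ι) (k : ℕ) :
    yDeg (Finsupp.single (.inl i) k : ι ⊕ ι →₀ ℕ) = 0 := by
  simp [yDeg]

@[simp] lemma xDeg_xyExp (i j : ι) : xDeg (xyExp i j) = 1 := by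
  classical
  simp [xDeg]

@[simp] lemma yDeg_xyExp (i j : ι) : yDeg (xyExp i j) = 1 := by
  classical
  simp [yDeg]

lemma yDeg_mono {d e : ι ⊕ ι →₀ ℕ} (h : d ≤ e) : yDeg d ≤ yDeg e :=
  Finset.sum_le_sum fun _ _ => h _

lemma degree_eq_xDeg_add_yDeg (d : ι ⊕ ι →₀ ℕ) : d.degree = xDeg d + yDeg d := by
  rw [Finsupp.degree_eq_sum, Fintype.sum_sum_type, xDeg, yDeg]

lemma degree_eq_sum_pairs (d : ι ⊕ ι →₀ ℕ) : d.degree = ∑ i, (d (.inl i) + d (.inr i)) := by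
  rw [degree_eq_xDeg_add_yDeg, xDeg, yDeg, Finset.sum_add_distrib]

@[simp] lemma degree_swapExp (d : ι ⊕ ι →₀ ℕ) : (swapExp d).degree = d.degree := by
  rw [degree_eq_xDeg_add_yDeg, degree_eq_xDeg_add_yDeg, xDeg_swapExp, yDeg_swapExp, add_comm]

@[simp] lemma degree_xyExp (i j : ι) : (xyExp i j).degree = 2 := by
  simp [degree_eq_xDeg_add_yDeg]

lemma exists_two_le_of_card_lt {d : ι ⊕ ι →₀ ℕ} (h : Fintype.card ι < d.degree) :
    ∃ i, 2 ≤ d (.inl i) + d (.inr i) := by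
  rw [degree_eq_sum_pairs, Fintype.card_eq_sum_ones] at h
  obtain ⟨i, -, hi⟩ := Finset.exists_lt_of_sum_lt h
  exact ⟨i, hi⟩

lemma IsMultilinear.degree_eq {d : ι ⊕ ι →₀ ℕ} (hd : IsMultilinear d) :
    d.degree = Fintype.card ι := by
  simp [degree_eq_sum_pairs, hd _]

end Exponents

section Action

variable [Field F]

noncomputable def swapHom : MvPolynomial (ι ⊕ ι) F →ₐ[F] MvPolynomial (ι ⊕ ι) F :=
  aeval (Sum.elim (fun i => X (.inr i)) (fun i => X (.inl i)))

noncomputable def scaleHom (a : Fˣ) : MvPolynomial (ι ⊕ ι) F →ₐ[F] MvPolynomial (ι ⊕ ι) F :=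
  aeval (Sum.elim (fun i => C (a : F)⁻¹ * X (.inl i)) (fun i => C (a : F) * X (.inr i)))

def invariants : Subalgebra F (MvPolynomial (ι ⊕ ι) F) where
  carrier := {f | swapHom f = f ∧ ∀ a : Fˣ, scaleHom a f = f}
  mul_mem' hf hg := ⟨by rw [map_mul, hf.1, hg.1], fun a => by rw [map_mul, hf.2 a, hg.2 a]⟩
  add_mem' hf hg := ⟨by rw [map_add, hf.1, hg.1], fun a => by rw [map_add, hf.2 a, hg.2 a]⟩
  algebraMap_mem' c := ⟨AlgHom.commutes _ c, fun a => AlgHom.commutes _ c⟩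

variable (F) in
noncomputable def generatedInDegreeLE (D : ℕ) : Subalgebra F (MvPolynomial (ι ⊕ ι) F) :=
  Algebra.adjoin F {g | g ∈ invariants ∧ g.totalDegree ≤ D}

lemma mem_generatedInDegreeLE_of_mem_invariants {D : ℕ} {g : MvPolynomial (ι ⊕ ι) F}
    (hg : g ∈ invariants) (hgD : g.totalDegree ≤ D) : g ∈ generatedInDegreeLE F D :=
  Algebra.subset_adjoin ⟨hg, hgD⟩

lemma swapHom_eq_rename : (swapHom : MvPolynomial (ι ⊕ ι) F →ₐ[F] _) = rename Sum.swap := by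
  ext (_ | _) <;> simp [swapHom]

lemma coeff_swapHom (f : MvPolynomial (ι ⊕ ι) F) (d : ι ⊕ ι →₀ ℕ) :
    coeff d (swapHom f) = coeff (swapExp d) f := by
  conv_lhs => rw [← swapExp_swapExp d, swapExp_eq_mapDomain (swapExp d), swapHom_eq_rename]
  exact coeff_rename_mapDomain _ Sum.swap_leftInverse.injective f _

lemma swapHom_monomial (d : ι ⊕ ι →₀ ℕ) (c : F) :
    swapHom (monomial d c) = monomial (swapExp d) c := by
  rw [swapHom_eq_rename, rename_monomial, swapExp_eq_mapDomain]

lemma X_mul_X_mem_invariants (i : ι) :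
    (X (.inl i) * X (.inr i) : MvPolynomial (ι ⊕ ι) F) ∈ invariants := by
  refine ⟨by simp [swapHom, mul_comm], fun a => ?_⟩
  simp only [scaleHom, map_mul, aeval_X, Sum.elim_inl, Sum.elim_inr]
  rw [mul_mul_mul_comm, ← C_mul, inv_mul_cancel₀ (Units.ne_zero a), C_1, one_mul]

variable [Fintype ι]

lemma coeff_scaleHom (a : Fˣ) (f : MvPolynomial (ι ⊕ ι) F) (d : ι ⊕ ι →₀ ℕ) :
    coeff d (scaleHom a f) = coeff d f * ((a : F)⁻¹ ^ xDeg d * (a : F) ^ yDeg d) := by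
  have hscale : scaleHom a = aeval fun s : ι ⊕ ι =>
      C (Sum.elim (fun _ => (a : F)⁻¹) (fun _ => (a : F)) s) * X s := by
    rw [scaleHom]
    congr
    ext (_ | _) <;> rfl
  rw [hscale, coeff_aeval_C_mul_X_s17, Finsupp.prod_pow, Fintype.prod_sum_type]
  simp [xDeg, yDeg, Finset.prod_pow_eq_pow_sum]

variable (F) in
def Admissible (d : ι ⊕ ι →₀ ℕ) : Prop := ∀ a : Fˣ, (a : F) ^ xDeg d = (a : F) ^ yDeg d

namespace Admissible

variable {d e : ι ⊕ ι →₀ ℕ}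

lemma add (hd : Admissible F d) (he : Admissible F e) : Admissible F (d + e) := fun a => by
  rw [xDeg_add, yDeg_add, pow_add, pow_add, hd a, he a]

lemma add_left_cancel (hd : Admissible F d) (hde : Admissible F (d + e)) : Admissible F e :=
  fun a => by
    have := hde a
    rw [xDeg_add, yDeg_add, pow_add, pow_add, hd a] at this
    exact mul_left_cancel₀ (pow_ne_zero _ (Units.ne_zero a)) this

lemma swapExp (hd : Admissible F d) : Admissible F (swapExp d) := fun a => (hd a).symm

end Admissible

lemma admissible_of_xDeg_eq_yDeg {d : ι ⊕ ι →₀ ℕ} (h : xDeg d = yDeg d) : Admissible F d :=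
  fun a => by rw [h]

lemma admissible_xyExp (i j : ι) : Admissible F (xyExp i j) :=
  admissible_of_xDeg_eq_yDeg (by simp)

lemma admissible_iff_modEq [Fintype F] {d : ι ⊕ ι →₀ ℕ} :
    Admissible F d ↔ xDeg d ≡ yDeg d [MOD Fintype.card F - 1] := by
  classical
  constructor
  · intro h
    obtain ⟨g, hg⟩ := IsCyclic.exists_ofOrder_eq_natCard (α := Fˣ)
    rw [Nat.card_eq_fintype_card, Fintype.card_units] at hg
    rw [← hg, ← pow_eq_pow_iff_modEq]
    exact Units.ext (by simpa using h g)
  · intro h a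
    have hdvd : orderOf a ∣ Fintype.card F - 1 := Fintype.card_units (α := F) ▸ orderOf_dvd_card
    simpa using congrArg Units.val (pow_eq_pow_iff_modEq.2 (h.of_dvd hdvd))

lemma forall_scaleHom_eq_iff {f : MvPolynomial (ι ⊕ ι) F} :
    (∀ a : Fˣ, scaleHom a f = f) ↔ ∀ d ∈ f.support, Admissible F d := by
  have hunit (a : Fˣ) (d : ι ⊕ ι →₀ ℕ) :
      (a : F)⁻¹ ^ xDeg d * (a : F) ^ yDeg d = 1 ↔ (a : F) ^ xDeg d = (a : F) ^ yDeg d := by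
    rw [inv_pow, inv_mul_eq_one₀ (pow_ne_zero _ (Units.ne_zero a))]
  simp only [Admissible, ← hunit, MvPolynomial.ext_iff, coeff_scaleHom]
  refine ⟨fun h d hd a => (mul_eq_left₀ (mem_support_iff.1 hd)).1 (h a d), fun h a d => ?_⟩
  by_cases hd : d ∈ f.support
  · rw [h d hd a, mul_one]
  · rw [notMem_support_iff.1 hd, zero_mul]

lemma admissible_of_mem_support {f : MvPolynomial (ι ⊕ ι) F} (hf : f ∈ invariants)
    {d : ι ⊕ ι →₀ ℕ} (hd : d ∈ f.support) : Admissible F d :=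
  forall_scaleHom_eq_iff.1 hf.2 d hd

end Action

section OrbitSum

variable [Field F]

variable (F) in
noncomputable def orbitSum (d : ι ⊕ ι →₀ ℕ) : MvPolynomial (ι ⊕ ι) F :=
  monomial d 1 + monomial (swapExp d) 1

lemma orbitSum_swapExp (d : ι ⊕ ι →₀ ℕ) : orbitSum F (swapExp d) = orbitSum F d := by
  rw [orbitSum, orbitSum, swapExp_swapExp, add_comm]

lemma swapHom_orbitSum (d : ι ⊕ ι →₀ ℕ) : swapHom (orbitSum F d) = orbitSum F d := by
  rw [orbitSum, map_add, swapHom_monomial, swapHom_monomial, swapExp_swapExp, add_comm]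

lemma coeff_orbitSum_self {d : ι ⊕ ι →₀ ℕ} (hd : swapExp d ≠ d) :
    coeff d (orbitSum F d) = 1 := by
  classical
  simp [orbitSum, coeff_monomial, hd]

lemma coeff_zero_orbitSum {d : ι ⊕ ι →₀ ℕ} (hd : swapExp d ≠ d) :
    coeff 0 (orbitSum F d) = 0 := by
  classical
  have : d ≠ 0 := by rintro rfl; simp at hd
  simp [orbitSum, coeff_monomial, this]

lemma orbitSum_mul_orbitSum (d e : ι ⊕ ι →₀ ℕ) :
    orbitSum F d * orbitSum F e = orbitSum F (d + e) + orbitSum F (d + swapExp e) := by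
  simp only [orbitSum, add_mul, mul_add, monomial_mul, one_mul, map_add, swapExp_swapExp]
  abel

lemma orbitSum_add (d e : ι ⊕ ι →₀ ℕ) :
    orbitSum F (d + e) = orbitSum F d * orbitSum F e - orbitSum F (d + swapExp e) := by
  rw [orbitSum_mul_orbitSum, add_sub_cancel_right]

lemma monomial_mul_orbitSum {d : ι ⊕ ι →₀ ℕ} (hd : swapExp d = d) (e : ι ⊕ ι →₀ ℕ) :
    monomial d (1 : F) * orbitSum F e = orbitSum F (d + e) := by
  simp only [orbitSum, mul_add, monomial_mul, one_mul, map_add, hd]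

theorem mem_of_swapHom_eq (P : Submodule F (MvPolynomial (ι ⊕ ι) F))
    {f : MvPolynomial (ι ⊕ ι) F} (hf : swapHom f = f)
    (hdiag : ∀ d ∈ f.support, swapExp d = d → monomial d 1 ∈ P)
    (hoff : ∀ d ∈ f.support, swapExp d ≠ d → orbitSum F d ∈ P) : f ∈ P := by
  induction hn : f.support.card using Nat.strong_induction_on generalizing f with
  | _ n ih =>
  classical
  obtain h | ⟨d, hd⟩ := f.support.eq_empty_or_nonempty
  · rw [support_eq_empty.1 h]
    exact P.zero_mem
  -- subtracting `coeff d f • g` for the orbit polynomial `g` of `d` kills `d` and `swapExp d`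
  suffices ∃ g ∈ P, swapHom g = g ∧ coeff d g = 1 ∧
      ∀ e, e ≠ d → e ≠ swapExp d → coeff e g = 0 by
    obtain ⟨g, hgP, hg, hgd, hge⟩ := this
    set f' := f - coeff d f • g
    have hf' : swapHom f' = f' := by simp only [f', map_sub, map_smul, hf, hg]
    have hf'd : coeff d f' = 0 := by simp [f', hgd]
    have hsupp : f'.support ⊆ f.support.erase d := by
      intro e he
      have hne : coeff e f' ≠ 0 := mem_support_iff.1 he
      have hed : e ≠ d := by rintro rfl; exact hne hf'd
      have hesd : e ≠ swapExp d := by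
        rintro rfl
        rw [← hf', coeff_swapHom, swapExp_swapExp] at hne
        exact hne hf'd
      refine Finset.mem_erase.2 ⟨hed, mem_support_iff.2 ?_⟩
      simpa [f', hge e hed hesd] using hne
    have hf'P := ih _ (hn ▸ (Finset.card_le_card hsupp).trans_lt (Finset.card_erase_lt_of_mem hd))
      hf' (fun e he => hdiag e (Finset.mem_of_mem_erase (hsupp he)))
      (fun e he => hoff e (Finset.mem_of_mem_erase (hsupp he))) rfl
    simpa [f'] using P.add_mem hf'P (P.smul_mem (coeff d f) hgP)
  by_cases h : swapExp d = d
  · refine ⟨monomial d 1, hdiag d hd h, by rw [swapHom_monomial, h], by simp, fun e hed _ => ?_⟩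
    simp [coeff_monomial, Ne.symm hed]
  · refine ⟨orbitSum F d, hoff d hd h, swapHom_orbitSum d, coeff_orbitSum_self h,
      fun e hed hesd => ?_⟩
    simp [orbitSum, coeff_monomial, Ne.symm hed, Ne.symm hesd]

variable [Fintype ι]

lemma orbitSum_mem_invariants {d : ι ⊕ ι →₀ ℕ} (hd : Admissible F d) :
    orbitSum F d ∈ invariants := by
  classical
  refine ⟨swapHom_orbitSum d, forall_scaleHom_eq_iff.2 fun e he => ?_⟩
  rcases Finset.mem_union.1 (support_add he) with he | he <;>
    obtain rfl := Finset.mem_singleton.1 (support_monomial_subset he)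
  exacts [hd, hd.swapExp]

lemma totalDegree_orbitSum_le (d : ι ⊕ ι →₀ ℕ) : (orbitSum F d).totalDegree ≤ d.degree := by
  refine (totalDegree_add _ _).trans (max_le ?_ ?_) <;>
    refine (totalDegree_monomial_le _ _).trans_eq ?_
  exacts [rfl, degree_swapExp d]

end OrbitSum

section UpperBound

variable [Field F] [Fintype ι] {M : ℕ}

lemma orbitSum_mem_of_degree_le {d : ι ⊕ ι →₀ ℕ} (hd : Admissible F d) (hdM : d.degree ≤ M) :
    orbitSum F d ∈ generatedInDegreeLE F M :=
  mem_generatedInDegreeLE_of_mem_invariants (orbitSum_mem_invariants hd)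
    ((totalDegree_orbitSum_le d).trans hdM)

lemma monomial_eq_prod_of_swapExp_eq {d : ι ⊕ ι →₀ ℕ} (hd : swapExp d = d) :
    monomial d (1 : F) = ∏ i, (X (.inl i) * X (.inr i)) ^ d (.inl i) := by
  have hdi (i : ι) : d (.inr i) = d (.inl i) := by rw [← swapExp_inl, hd]
  simp only [monomial_eq, C_1, one_mul, Finsupp.prod_pow, Fintype.prod_sum_type, hdi, mul_pow,
    Finset.prod_mul_distrib]

lemma monomial_mem_of_swapExp_eq (hM : 2 ≤ M) {d : ι ⊕ ι →₀ ℕ} (hd : swapExp d = d) :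
    monomial d (1 : F) ∈ generatedInDegreeLE F M := by
  rw [monomial_eq_prod_of_swapExp_eq hd]
  refine prod_mem fun i _ => pow_mem (mem_generatedInDegreeLE_of_mem_invariants
    (X_mul_X_mem_invariants i) ((totalDegree_mul _ _).trans ?_)) _
  simp only [totalDegree_X]
  omega

section Induction

variable {d : ι ⊕ ι →₀ ℕ}
  (IH : ∀ e : ι ⊕ ι →₀ ℕ, Admissible F e → e.degree < d.degree →
    orbitSum F e ∈ generatedInDegreeLE F M)
include IH

lemma orbitSum_mem_of_overlap (hM : 2 ≤ M) (hd : Admissible F d) {i : ι}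
    (hx : 1 ≤ d (.inl i)) (hy : 1 ≤ d (.inr i)) : orbitSum F d ∈ generatedInDegreeLE F M := by
  obtain ⟨r, rfl⟩ := le_iff_exists_add.1 (xyExp_le hx hy)
  have hp : swapExp (xyExp i i) = xyExp i i := swapExp_xyExp i i
  rw [← monomial_mul_orbitSum hp]
  refine mul_mem (monomial_mem_of_swapExp_eq hM hp)
    (IH r ((admissible_xyExp i i).add_left_cancel hd) ?_)
  simp

lemma orbitSum_mem_of_two_le_of_eq_zero (hM : 2 ≤ M) (hd : Admissible F d) {i : ι}
    (hx : 2 ≤ d (.inl i)) (hy : d (.inr i) = 0) (hyd : 1 ≤ yDeg d) :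
    orbitSum F d ∈ generatedInDegreeLE F M := by
  classical
  obtain ⟨j, -, hj⟩ := Finset.exists_ne_zero_of_sum_ne_zero (s := Finset.univ)
    (f := fun j => d (.inr j)) (by unfold yDeg at hyd; omega)
  obtain ⟨r, rfl⟩ := le_iff_exists_add.1 (xyExp_le (i := i) (j := j) (by omega)
    (Nat.one_le_iff_ne_zero.2 hj))
  have hr : Admissible F r := (admissible_xyExp i j).add_left_cancel hd
  have hji : j ≠ i := by rintro rfl; simp_all
  -- `r + xyExp j i` contains `x_i y_i`
  rw [add_comm, orbitSum_add, swapExp_xyExp]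
  refine sub_mem (mul_mem (IH r hr (by simp))
    (orbitSum_mem_of_degree_le (admissible_xyExp i j) (by simpa using hM))) ?_
  refine orbitSum_mem_of_overlap (fun e he h => IH e he (by simpa [add_comm] using h)) hM
    (hr.add (admissible_xyExp j i)) (i := i) ?_ (by simp)
  simp_all
  omega

lemma orbitSum_mem_of_mixed (hM : 2 ≤ M) (hιM : Fintype.card ι ≤ M) (hMd : M < d.degree)
    (hd : Admissible F d) (hxd : 1 ≤ xDeg d) (hyd : 1 ≤ yDeg d) :
    orbitSum F d ∈ generatedInDegreeLE F M := by
  obtain ⟨i, hi⟩ := exists_two_le_of_card_lt (hιM.trans_lt hMd)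
  by_cases hov : 1 ≤ d (.inl i) ∧ 1 ≤ d (.inr i)
  · exact orbitSum_mem_of_overlap IH hM hd hov.1 hov.2
  rcases Nat.eq_zero_or_pos (d (.inr i)) with hy | hy
  · exact orbitSum_mem_of_two_le_of_eq_zero IH hM hd (by omega) hy hyd
  · rw [← orbitSum_swapExp]
    refine orbitSum_mem_of_two_le_of_eq_zero (fun e he h => IH e he (by simpa using h)) hM
      hd.swapExp (i := i) ?_ ?_ (by simpa using hxd) <;> simp <;> omega

lemma orbitSum_mem_of_yDeg_eq_zero [Fintype F] (hM : 2 ≤ M) (hqM : Fintype.card F - 1 ≤ M)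
    (hιM : Fintype.card ι ≤ M) (hMd : M < d.degree) (hd : Admissible F d) (hyd : yDeg d = 0) :
    orbitSum F d ∈ generatedInDegreeLE F M := by
  have hq : 1 < Fintype.card F := Fintype.one_lt_card
  obtain ⟨c, hcd, hc⟩ := Finsupp.exists_le_degree_eq d (Fintype.card F - 1) (by omega)
  have hyc : yDeg c = 0 := Nat.eq_zero_of_le_zero (hyd ▸ yDeg_mono hcd)
  have hxc : xDeg c = Fintype.card F - 1 := by rw [degree_eq_xDeg_add_yDeg] at hc; omega
  have hca : Admissible F c :=
    admissible_iff_modEq.2 (by rw [hxc, hyc]; exact Nat.modEq_zero_iff_dvd.2 dvd_rfl)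
  obtain ⟨r, rfl⟩ := le_iff_exists_add.1 hcd
  have hr : Admissible F r := hca.add_left_cancel hd
  have hrx : r.degree = xDeg r := by
    rw [degree_eq_xDeg_add_yDeg, (by simpa [hyc] using hyd : yDeg r = 0), add_zero]
  have hdeg : (c + r).degree = Fintype.card F - 1 + xDeg r := by rw [map_add, hc, hrx]
  -- `r + swapExp c` involves both the `x`s and the `y`s
  rw [add_comm, orbitSum_add]
  refine sub_mem (mul_mem (IH r hr (by omega)) (orbitSum_mem_of_degree_le hca (by omega))) ?_
  have hdeg' : (r + swapExp c).degree = (c + r).degree := by simp [add_comm]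
  refine orbitSum_mem_of_mixed (fun e he h => IH e he (hdeg' ▸ h)) hM hιM (by omega)
    (hr.add hca.swapExp) (by simp; omega) (by simp; omega)

end Induction

theorem orbitSum_mem_generatedInDegreeLE [Fintype F] (hM : 2 ≤ M)
    (hqM : Fintype.card F - 1 ≤ M) (hιM : Fintype.card ι ≤ M) {d : ι ⊕ ι →₀ ℕ}
    (hd : Admissible F d) : orbitSum F d ∈ generatedInDegreeLE F M := by
  induction hn : d.degree using Nat.strong_induction_on generalizing d with
  | _ n ih =>
  have IH (e : ι ⊕ ι →₀ ℕ) (he : Admissible F e) (h : e.degree < d.degree) :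
      orbitSum F e ∈ generatedInDegreeLE F M := ih _ (hn ▸ h) he rfl
  rcases le_or_gt d.degree M with hdM | hMd
  · exact orbitSum_mem_of_degree_le hd hdM
  by_cases hy : yDeg d = 0
  · exact orbitSum_mem_of_yDeg_eq_zero IH hM hqM hιM hMd hd hy
  by_cases hx : xDeg d = 0
  · rw [← orbitSum_swapExp]
    exact orbitSum_mem_of_yDeg_eq_zero (fun e he h => IH e he (by simpa using h)) hM hqM hιM
      (by simpa using hMd) hd.swapExp (by simpa using hx)
  exact orbitSum_mem_of_mixed IH hM hιM hMd hd (by omega) (by omega)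

theorem mem_generatedInDegreeLE [Fintype F] (hM : 2 ≤ M) (hqM : Fintype.card F - 1 ≤ M)
    (hιM : Fintype.card ι ≤ M) {f : MvPolynomial (ι ⊕ ι) F} (hf : f ∈ invariants) :
    f ∈ generatedInDegreeLE F M :=
  mem_of_swapHom_eq (generatedInDegreeLE F M).toSubmodule hf.1
    (fun _ _ hd => monomial_mem_of_swapExp_eq hM hd)
    (fun _ hd _ => orbitSum_mem_generatedInDegreeLE hM hqM hιM (admissible_of_mem_support hf hd))

end UpperBound

section LowerBoundCardSubOne

variable [Field F] [Fintype F] [Fintype ι] {D : ℕ}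

def charge : ι ⊕ ι → ℤ := Sum.elim (fun _ => 1) (fun _ => -1)

lemma weight_charge (d : ι ⊕ ι →₀ ℕ) : Finsupp.weight charge d = xDeg d - yDeg d := by
  simp [Finsupp.weight_apply, Finsupp.sum_fintype, Fintype.sum_sum_type, charge, xDeg, yDeg,
    sub_eq_add_neg]

lemma isWeightedHomogeneous_charge_of_totalDegree_lt {g : MvPolynomial (ι ⊕ ι) F}
    (hg : g ∈ invariants) (hgq : g.totalDegree < Fintype.card F - 1) :
    IsWeightedHomogeneous charge g 0 := by
  intro d hd
  have hda := admissible_iff_modEq.1 (admissible_of_mem_support hg (mem_support_iff.2 hd))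
  have hdeg : xDeg d + yDeg d < Fintype.card F - 1 :=
    degree_eq_xDeg_add_yDeg d ▸ (le_totalDegree (mem_support_iff.2 hd)).trans_lt hgq
  rw [weight_charge, sub_eq_zero, Nat.cast_inj]
  exact hda.eq_of_lt_of_lt (by omega) (by omega)

lemma isWeightedHomogeneous_charge_of_mem (hD : D < Fintype.card F - 1)
    {f : MvPolynomial (ι ⊕ ι) F} (hf : f ∈ generatedInDegreeLE F D) :
    IsWeightedHomogeneous charge f 0 := by
  induction hf using Algebra.adjoin_induction with
  | mem g hg => exact isWeightedHomogeneous_charge_of_totalDegree_lt hg.1 (hg.2.trans_lt hD)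
  | algebraMap r => exact isWeightedHomogeneous_C _ r
  | add _ _ _ _ hx hy => exact hx.add hy
  | mul _ _ _ _ hx hy => simpa using hx.mul hy

theorem card_sub_one_le_of_forall_mem [Nonempty ι]
    (h : ∀ f : MvPolynomial (ι ⊕ ι) F, f ∈ invariants → f ∈ generatedInDegreeLE F D) :
    Fintype.card F - 1 ≤ D := by
  classical
  by_contra! hD
  obtain ⟨i⟩ := ‹Nonempty ι›
  have hq : 1 < Fintype.card F := Fintype.one_lt_card
  set d : ι ⊕ ι →₀ ℕ := Finsupp.single (.inl i) (Fintype.card F - 1)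
  have hd : Admissible F d := by
    rw [admissible_iff_modEq, xDeg_single_inl, yDeg_single_inl]
    exact Nat.modEq_zero_iff_dvd.2 dvd_rfl
  have hsd : swapExp d ≠ d := fun h => by
    have := DFunLike.congr_fun h (.inl i)
    simp [d] at this
    omega
  have hw := isWeightedHomogeneous_charge_of_mem hD (h _ (orbitSum_mem_invariants hd))
    (by rw [coeff_orbitSum_self hsd]; exact one_ne_zero)
  rw [weight_charge, xDeg_single_inl, yDeg_single_inl] at hw
  omega

end LowerBoundCardSubOne

section LowerBoundCard

lemma exists_isMultilinear_admissible [Fintype ι] [Field F] [Fintype F] [CharP F 2]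
    (hq : Fintype.card F - 1 ≤ Fintype.card ι) :
    ∃ d : ι ⊕ ι →₀ ℕ, IsMultilinear d ∧ Admissible F d := by
  classical
  have hodd : Odd (Fintype.card F - 1) := by
    have := FiniteField.even_card_of_char_two (ringChar.eq F 2)
    have := Fintype.one_lt_card (α := F)
    rw [Nat.odd_iff]
    omega
  obtain ⟨k, hk, hkm⟩ := Nat.exists_lt_two_mul_modEq hodd (Fintype.card ι)
  obtain ⟨S, -, hS⟩ := Finset.exists_subset_card_eq (s := (Finset.univ : Finset ι)) (n := k)
    (by simp; omega)
  set d : ι ⊕ ι →₀ ℕ := Finsupp.equivFunOnFinite.symm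
    (Sum.elim (fun i => if i ∈ S then 1 else 0) (fun i => if i ∈ S then 0 else 1))
  have hd : IsMultilinear d := fun i => by by_cases hi : i ∈ S <;> simp [d, hi]
  have hx : xDeg d = k := by simp [d, xDeg, hS]
  have hy : yDeg d = Fintype.card ι - k := by
    have := hd.degree_eq
    rw [degree_eq_xDeg_add_yDeg] at this
    omega
  refine ⟨d, hd, admissible_iff_modEq.2 (Nat.ModEq.add_right_cancel' k ?_)⟩
  rw [hx, hy, Nat.sub_add_cancel (by omega), ← two_mul]
  exact hkm

variable [Field F] [Fintype ι] [DecidableEq ι] (i₀ : ι)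

noncomputable def testSet : Finset (ι ⊕ ι →₀ ℕ) :=
  (Finset.Iic (Finsupp.equivFunOnFinite.symm 1)).filter
    fun e => IsMultilinear e ∧ e (.inl i₀) = 1

lemma mem_testSet {e : ι ⊕ ι →₀ ℕ} : e ∈ testSet i₀ ↔ IsMultilinear e ∧ e (.inl i₀) = 1 := by
  refine Finset.mem_filter.trans (and_iff_right_of_imp fun he => Finset.mem_Iic.2 ?_)
  rintro (i | i) <;> have := he.1 i <;> simp <;> omega

variable (F) in
noncomputable def testFunctional : MvPolynomial (ι ⊕ ι) F →ₗ[F] F :=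
  ∑ e ∈ testSet i₀, lcoeff F e

lemma testFunctional_apply (f : MvPolynomial (ι ⊕ ι) F) :
    testFunctional F i₀ f = ∑ e ∈ testSet i₀, coeff e f := by
  simp [testFunctional]

lemma testFunctional_monomial (d : ι ⊕ ι →₀ ℕ) (c : F) :
    testFunctional F i₀ (monomial d c) = if IsMultilinear d ∧ d (.inl i₀) = 1 then c else 0 := by
  classical
  simp only [testFunctional_apply, coeff_monomial, Finset.sum_ite_eq, mem_testSet]

lemma testFunctional_orbitSum (d : ι ⊕ ι →₀ ℕ) :
    testFunctional F i₀ (orbitSum F d) = if IsMultilinear d then 1 else 0 := by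
  have hsd : IsMultilinear (swapExp d) ↔ IsMultilinear d := by
    simpa using isMultilinear_add_swapExp_iff (d := 0) (e := d)
  have hi₀ (h : IsMultilinear d) : d (.inl i₀) + d (.inr i₀) = 1 := h i₀
  simp only [orbitSum, map_add, testFunctional_monomial, hsd, swapExp_inl]
  split_ifs <;> simp_all
  omega

lemma testFunctional_eq_zero_of_totalDegree_lt {f : MvPolynomial (ι ⊕ ι) F}
    (hf : f.totalDegree < Fintype.card ι) : testFunctional F i₀ f = 0 := by
  rw [testFunctional_apply]
  refine Finset.sum_eq_zero fun e he => coeff_eq_zero_of_totalDegree_lt ?_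
  rwa [← Finsupp.degree_apply, ((mem_testSet i₀).1 he).1.degree_eq]

lemma testFunctional_one : testFunctional F i₀ 1 = 0 :=
  testFunctional_eq_zero_of_totalDegree_lt i₀ (by simp [Fintype.card_pos_iff.2 ⟨i₀⟩])

lemma testFunctional_monomial_mul {d : ι ⊕ ι →₀ ℕ} {i : ι} (hx : 1 ≤ d (.inl i))
    (hy : 1 ≤ d (.inr i)) (g : MvPolynomial (ι ⊕ ι) F) :
    testFunctional F i₀ (monomial d 1 * g) = 0 := by
  rw [testFunctional_apply]
  refine Finset.sum_eq_zero fun e he => ?_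
  rw [coeff_monomial_mul', if_neg (not_le_of_isMultilinear hx hy ((mem_testSet i₀).1 he).1)]

lemma testFunctional_orbitSum_mul_orbitSum [CharP F 2] (d e : ι ⊕ ι →₀ ℕ) :
    testFunctional F i₀ (orbitSum F d * orbitSum F e) = 0 := by
  simp only [orbitSum_mul_orbitSum, map_add, testFunctional_orbitSum,
    isMultilinear_add_swapExp_iff, CharTwo.add_self_eq_zero]

variable (F) in
noncomputable def leibnizLocus (q : MvPolynomial (ι ⊕ ι) F) :
    Submodule F (MvPolynomial (ι ⊕ ι) F) :=
  LinearMap.eqLocus (testFunctional F i₀ ∘ₗ LinearMap.mulRight F q)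
    (testFunctional F i₀ q • lcoeff F 0 + coeff 0 q • testFunctional F i₀)

variable {i₀}

lemma mem_leibnizLocus {p q : MvPolynomial (ι ⊕ ι) F} :
    p ∈ leibnizLocus F i₀ q ↔ testFunctional F i₀ (p * q) =
      coeff 0 p * testFunctional F i₀ q + testFunctional F i₀ p * coeff 0 q := by
  simp [leibnizLocus, mul_comm]

lemma mem_leibnizLocus_comm {p q : MvPolynomial (ι ⊕ ι) F} :
    p ∈ leibnizLocus F i₀ q ↔ q ∈ leibnizLocus F i₀ p := by
  rw [mem_leibnizLocus, mem_leibnizLocus, mul_comm q p]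
  exact ⟨fun h => by rw [h]; ring, fun h => by rw [h]; ring⟩

lemma monomial_mem_leibnizLocus {d : ι ⊕ ι →₀ ℕ} (hd : swapExp d = d)
    (q : MvPolynomial (ι ⊕ ι) F) : monomial d 1 ∈ leibnizLocus F i₀ q := by
  obtain rfl | ⟨s, hs⟩ := eq_or_ne d 0 |>.imp_right Finsupp.ne_iff.1
  · simp [mem_leibnizLocus, testFunctional_one]
  have hdi (i : ι) : d (.inr i) = d (.inl i) := by rw [← swapExp_inl, hd]
  obtain ⟨i, hx, hy⟩ : ∃ i, 1 ≤ d (.inl i) ∧ 1 ≤ d (.inr i) := by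
    rcases s with i | i <;> exact ⟨i, by simp_all; omega⟩
  have h0 : coeff 0 (monomial d (1 : F)) = 0 := by
    rw [coeff_monomial, if_neg]
    rintro rfl
    simp at hx
  have h1 : testFunctional F i₀ (monomial d 1) = 0 := by
    simpa using testFunctional_monomial_mul i₀ hx hy (1 : MvPolynomial (ι ⊕ ι) F)
  rw [mem_leibnizLocus, testFunctional_monomial_mul i₀ hx hy, h0, h1]
  ring

variable [CharP F 2]

lemma orbitSum_mem_leibnizLocus_orbitSum {d e : ι ⊕ ι →₀ ℕ} (hd : swapExp d ≠ d)
    (he : swapExp e ≠ e) : orbitSum F d ∈ leibnizLocus F i₀ (orbitSum F e) := by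
  rw [mem_leibnizLocus, testFunctional_orbitSum_mul_orbitSum, coeff_zero_orbitSum hd,
    coeff_zero_orbitSum he]
  ring

lemma orbitSum_mem_leibnizLocus {d : ι ⊕ ι →₀ ℕ} (hd : swapExp d ≠ d)
    {q : MvPolynomial (ι ⊕ ι) F} (hq : swapHom q = q) : orbitSum F d ∈ leibnizLocus F i₀ q :=
  mem_leibnizLocus_comm.2 <| mem_of_swapHom_eq _ hq (fun _ _ he => monomial_mem_leibnizLocus he _)
    fun _ _ he => orbitSum_mem_leibnizLocus_orbitSum he hd

theorem testFunctional_mul {p q : MvPolynomial (ι ⊕ ι) F} (hp : swapHom p = p)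
    (hq : swapHom q = q) :
    testFunctional F i₀ (p * q) =
      coeff 0 p * testFunctional F i₀ q + testFunctional F i₀ p * coeff 0 q :=
  mem_leibnizLocus.1 <| mem_of_swapHom_eq _ hp (fun _ _ hd => monomial_mem_leibnizLocus hd q)
    fun _ _ hd => orbitSum_mem_leibnizLocus hd hq

theorem testFunctional_eq_zero_of_mem {D : ℕ} (hD : D < Fintype.card ι)
    {f : MvPolynomial (ι ⊕ ι) F} (hf : f ∈ generatedInDegreeLE F D) :
    testFunctional F i₀ f = 0 := by
  suffices swapHom f = f ∧ testFunctional F i₀ f = 0 from this.2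
  induction hf using Algebra.adjoin_induction with
  | mem g hg => exact ⟨hg.1.1, testFunctional_eq_zero_of_totalDegree_lt i₀ (hg.2.trans_lt hD)⟩
  | algebraMap r =>
    exact ⟨AlgHom.commutes _ r, testFunctional_eq_zero_of_totalDegree_lt i₀ (by simp; omega)⟩
  | add x y _ _ hx hy => exact ⟨by rw [map_add, hx.1, hy.1], by rw [map_add, hx.2, hy.2, add_zero]⟩
  | mul x y _ _ hx hy =>
    exact ⟨by rw [map_mul, hx.1, hy.1], by rw [testFunctional_mul hx.1 hy.1, hx.2, hy.2]; ring⟩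

theorem card_le_of_forall_mem [Fintype F] [Nonempty ι] {D : ℕ}
    (hq : Fintype.card F - 1 ≤ Fintype.card ι)
    (h : ∀ f : MvPolynomial (ι ⊕ ι) F, f ∈ invariants → f ∈ generatedInDegreeLE F D) :
    Fintype.card ι ≤ D := by
  by_contra! hD
  obtain ⟨i₀⟩ := ‹Nonempty ι›
  obtain ⟨d, hdm, hda⟩ := exists_isMultilinear_admissible (F := F) hq
  have h1 := testFunctional_orbitSum (F := F) i₀ d
  rw [if_pos hdm, testFunctional_eq_zero_of_mem hD (h _ (orbitSum_mem_invariants hda))] at h1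
  exact zero_ne_one h1

end LowerBoundCard

end O2Plus

theorem noether_number_general (F : Type*) [Field F] [Fintype F]
    (hchar : ringChar F = 2) (h4 : 4 ≤ Fintype.card F) (m : ℕ) (hm : 0 < m) :
    IsLeast
      {d : ℕ |
        ∀ f : MvPolynomial (Fin m ⊕ Fin m) F,
          (aeval (R := F) (Sum.elim
                (fun i : Fin m => (X (Sum.inr i) : MvPolynomial (Fin m ⊕ Fin m) F))
                (fun i : Fin m => X (Sum.inl i))) f = f ∧
              ∀ a : Fˣ,
                aeval (R := F) (Sum.elim
                    (fun i : Fin m => C ((a : F)⁻¹) * X (Sum.inl i))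
                    (fun i : Fin m =>
                      C ((a : F)) * (X (Sum.inr i) : MvPolynomial (Fin m ⊕ Fin m) F))) f = f) →
            f ∈ Algebra.adjoin F
              {g : MvPolynomial (Fin m ⊕ Fin m) F |
                (aeval (R := F) (Sum.elim
                      (fun i : Fin m => (X (Sum.inr i) : MvPolynomial (Fin m ⊕ Fin m) F))
                      (fun i : Fin m => X (Sum.inl i))) g = g ∧
                    ∀ a : Fˣ,
                      aeval (R := F) (Sum.elim
                          (fun i : Fin m => C ((a : F)⁻¹) * X (Sum.inl i))
                          (fun i : Fin m =>
                            C ((a : F)) * (X (Sum.inr i) : MvPolynomial (Fin m ⊕ Fin m) F))) g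
                        = g) ∧
                  g.totalDegree ≤ d}}
      (max (Fintype.card F - 1) m) := by
  have : CharP F 2 := ringChar.of_eq hchar
  have : Nonempty (Fin m) := ⟨⟨0, hm⟩⟩
  show IsLeast {D | ∀ f, f ∈ O2Plus.invariants → f ∈ O2Plus.generatedInDegreeLE F D} _
  refine ⟨fun f hf => O2Plus.mem_generatedInDegreeLE (by omega) (le_max_left _ _)
    (by simp) hf, fun D hD => max_le (O2Plus.card_sub_one_le_of_forall_mem hD) ?_⟩
  rcases le_total m (Fintype.card F - 1) with hmq | hqm
  · exact hmq.trans (O2Plus.card_sub_one_le_of_forall_mem hD)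
  · simpa using O2Plus.card_le_of_forall_mem (by simpa using hqm) hD

/-- The Noether number of `O₂⁺(F_q)` (char 2, `q ≥ 4`) on `m` copies of the
standard representation equals `max (q-1) m`: `max (q-1) m` is the least `d`
such that every invariant of `F_q[x₁,…,x_m,y₁,…,y_m]` under the swap
`σ : x_i ↔ y_i` and the scalings `τ_a : x_i ↦ a⁻¹x_i, y_i ↦ a·y_i` lies in the
subalgebra generated by invariants of (total) degree at most `d`.
Variables: `x_i = X (Sum.inl i)`, `y_i = X (Sum.inr i)`. -/
theorem noether_number (F : Type*) [Field F] [Fintype F] [DecidableEq F]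
    (hchar : ringChar F = 2) (h4 : 4 ≤ Fintype.card F) (m : ℕ) (hm : 0 < m) :
    IsLeast
      {d : ℕ |
        ∀ f : MvPolynomial (Fin m ⊕ Fin m) F,
          (aeval (R := F) (Sum.elim
                (fun i : Fin m => (X (Sum.inr i) : MvPolynomial (Fin m ⊕ Fin m) F))
                (fun i : Fin m => X (Sum.inl i))) f = f ∧
              ∀ a : Fˣ,
                aeval (R := F) (Sum.elim
                    (fun i : Fin m => C ((a : F)⁻¹) * X (Sum.inl i))
                    (fun i : Fin m =>
                      C ((a : F)) * (X (Sum.inr i) : MvPolynomial (Fin m ⊕ Fin m) F))) f = f) →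
            f ∈ Algebra.adjoin F
              {g : MvPolynomial (Fin m ⊕ Fin m) F |
                (aeval (R := F) (Sum.elim
                      (fun i : Fin m => (X (Sum.inr i) : MvPolynomial (Fin m ⊕ Fin m) F))
                      (fun i : Fin m => X (Sum.inl i))) g = g ∧
                    ∀ a : Fˣ,
                      aeval (R := F) (Sum.elim
                          (fun i : Fin m => C ((a : F)⁻¹) * X (Sum.inl i))
                          (fun i : Fin m =>
                            C ((a : F)) * (X (Sum.inr i) : MvPolynomial (Fin m ⊕ Fin m) F))) g
                        = g) ∧
                  g.totalDegree ≤ d}}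
      (max (Fintype.card F - 1) m) :=
  noether_number_general F hchar h4 m hm
end

section
/- Let F_q have characteristic 2 and q ≥ 4. The vector invariant ring F_q[2V]^{O_2^+(F_q)} = F_q[x_1,x_2,y_1,y_2]^{O_2^+(F_q)} is generated as an F_q-algebra by the q+3 invariants N_1 = x_1y_1, N_2 = x_2y_2, U_{12} = x_1y_2 + x_2y_1, and B_k = x_1^k x_2^{q-1-k} + y_1^k y_2^{q-1-k} for 0 ≤ k ≤ q-1. -/
/-!
Write `O(x^a y^b) = x^a y^b + x^b y^a` for the orbit sum of a monomial under the swap `σ`.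
A monomial is fixed by all `τ_a` exactly when its `x`- and `y`-degrees agree modulo `q - 1`,
so an invariant polynomial is a combination of such orbit sums and of the `σ`-fixed monomials
`N₁^a N₂^b`: subtracting the term through a monomial of its support leaves an invariant
polynomial of smaller support.

Orbit sums multiply by `O(m) O(m') = O(m m') + O(m σ(m'))`. After dividing out `N₁` and `N₂`
an orbit sum is, up to `σ`, either pure, `x₁^a x₂^b + y₁^a y₂^b` with `q - 1 ∣ a + b`, which is
`B_k` times a pure orbit sum of lower degree minus a mixed one of the same degree, or cross,
`x₁^a y₂^b + x₂^b y₁^a`, which is `U₁₂` times one of lower degree minus one divisible by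
`N₁` or `N₂`. So all of them lie in the algebra generated by `N₁, N₂, U₁₂` and the `B_k`.
-/

open MvPolynomial

namespace O2PlusInvariants

open Algebra

section OrbitSums

variable {R : Type*} [CommRing R]

/-- `x₁^a₁ x₂^a₂ y₁^b₁ y₂^b₂`, where `x₁, x₂, y₁, y₂` are `X 0, X 1, X 2, X 3`. -/
noncomputable def xyMonomial (a₁ a₂ b₁ b₂ : ℕ) : MvPolynomial (Fin 4) R :=
  X 0 ^ a₁ * X 1 ^ a₂ * X 2 ^ b₁ * X 3 ^ b₂

noncomputable def orbitSum (a₁ a₂ b₁ b₂ : ℕ) : MvPolynomial (Fin 4) R :=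
  xyMonomial a₁ a₂ b₁ b₂ + xyMonomial b₁ b₂ a₁ a₂

theorem xyMonomial_self (a b : ℕ) :
    (xyMonomial a b a b : MvPolynomial (Fin 4) R) = (X 0 * X 2) ^ a * (X 1 * X 3) ^ b := by
  rw [xyMonomial]; ring

theorem orbitSum_comm (a₁ a₂ b₁ b₂ : ℕ) :
    (orbitSum b₁ b₂ a₁ a₂ : MvPolynomial (Fin 4) R) = orbitSum a₁ a₂ b₁ b₂ :=
  add_comm _ _

theorem orbitSum_zero : (orbitSum 0 0 0 0 : MvPolynomial (Fin 4) R) = 2 := by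
  simp only [orbitSum, xyMonomial, pow_zero, mul_one]; norm_num

theorem orbitSum_mul_orbitSum (a₁ a₂ b₁ b₂ c₁ c₂ d₁ d₂ : ℕ) :
    (orbitSum a₁ a₂ b₁ b₂ * orbitSum c₁ c₂ d₁ d₂ : MvPolynomial (Fin 4) R) =
      orbitSum (a₁ + c₁) (a₂ + c₂) (b₁ + d₁) (b₂ + d₂) +
        orbitSum (a₁ + d₁) (a₂ + d₂) (b₁ + c₁) (b₂ + c₂) := by
  simp only [orbitSum, xyMonomial, pow_add]; ring

theorem orbitSum_add_one_add_one_fst (a₁ a₂ b₁ b₂ : ℕ) :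
    (orbitSum (a₁ + 1) a₂ (b₁ + 1) b₂ : MvPolynomial (Fin 4) R) =
      X 0 * X 2 * orbitSum a₁ a₂ b₁ b₂ := by
  simp only [orbitSum, xyMonomial]; ring

theorem orbitSum_add_one_add_one_snd (a₁ a₂ b₁ b₂ : ℕ) :
    (orbitSum a₁ (a₂ + 1) b₁ (b₂ + 1) : MvPolynomial (Fin 4) R) =
      X 1 * X 3 * orbitSum a₁ a₂ b₁ b₂ := by
  simp only [orbitSum, xyMonomial]; ring

theorem orbitSum_one_zero_zero_one :
    (orbitSum 1 0 0 1 : MvPolynomial (Fin 4) R) = X 0 * X 3 + X 1 * X 2 := by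
  simp only [orbitSum, xyMonomial]; ring

theorem orbitSum_pure (k l : ℕ) :
    (orbitSum k l 0 0 : MvPolynomial (Fin 4) R) = X 0 ^ k * X 1 ^ l + X 2 ^ k * X 3 ^ l := by
  simp only [orbitSum, xyMonomial]; ring

variable (R) in
def invGens (q : ℕ) : Set (MvPolynomial (Fin 4) R) :=
  insert (X 0 * X 2) (insert (X 1 * X 3) (insert (X 0 * X 3 + X 1 * X 2)
    (Set.range fun k : Fin q =>
      X 0 ^ (k : ℕ) * X 1 ^ (q - 1 - (k : ℕ)) + X 2 ^ (k : ℕ) * X 3 ^ (q - 1 - (k : ℕ)))))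

variable {q : ℕ}

theorem X0_mul_X2_mem_adjoin_invGens : X 0 * X 2 ∈ adjoin R (invGens R q) :=
  subset_adjoin (Set.mem_insert _ _)

theorem X1_mul_X3_mem_adjoin_invGens : X 1 * X 3 ∈ adjoin R (invGens R q) :=
  subset_adjoin (Set.mem_insert_of_mem _ (Set.mem_insert _ _))

theorem orbitSum_one_zero_zero_one_mem_adjoin_invGens :
    orbitSum 1 0 0 1 ∈ adjoin R (invGens R q) :=
  orbitSum_one_zero_zero_one (R := R) ▸ subset_adjoin (by simp [invGens])

theorem orbitSum_mem_adjoin_invGens_of_add_eq {k l : ℕ} (h : k + l + 1 = q) :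
    orbitSum k l 0 0 ∈ adjoin R (invGens R q) := by
  refine subset_adjoin (Set.mem_insert_of_mem _ (Set.mem_insert_of_mem _
    (Set.mem_insert_of_mem _ ⟨⟨k, by omega⟩, ?_⟩)))
  dsimp only
  rw [orbitSum_pure, show q - 1 - k = l by omega]

/-- The reduction steps decrease, in this order, the degree, then being pure, then having no
factor `N₁` or `N₂`. -/
def orbitSumRank (a₁ a₂ b₁ b₂ : ℕ) : ℕ :=
  2 * (a₁ + a₂ + b₁ + b₂) + (if a₁ + a₂ = 0 ∨ b₁ + b₂ = 0 then 2 else 0) +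
    (if (a₁ = 0 ∨ b₁ = 0) ∧ (a₂ = 0 ∨ b₂ = 0) then 1 else 0)

theorem orbitSumRank_comm (a₁ a₂ b₁ b₂ : ℕ) :
    orbitSumRank b₁ b₂ a₁ a₂ = orbitSumRank a₁ a₂ b₁ b₂ := by
  grind [orbitSumRank]

theorem orbitSum_pure_mem_adjoin_invGens {a₁ a₂ : ℕ} (hdvd : q - 1 ∣ a₁ + a₂)
    (ih : ∀ c₁ c₂ d₁ d₂, orbitSumRank c₁ c₂ d₁ d₂ < orbitSumRank a₁ a₂ 0 0 →
      c₁ + c₂ ≡ d₁ + d₂ [MOD q - 1] → orbitSum c₁ c₂ d₁ d₂ ∈ adjoin R (invGens R q)) :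
    orbitSum a₁ a₂ 0 0 ∈ adjoin R (invGens R q) := by
  rcases Nat.eq_zero_or_pos (a₁ + a₂) with h0 | hpos
  · obtain ⟨rfl, rfl⟩ : a₁ = 0 ∧ a₂ = 0 := by omega
    rw [orbitSum_zero]; exact ofNat_mem _ 2
  have hn : 0 < q - 1 := Nat.pos_of_ne_zero fun h0 => by
    rw [h0, zero_dvd_iff] at hdvd; omega
  have hle : q - 1 ≤ a₁ + a₂ := Nat.le_of_dvd hpos hdvd
  rcases hle.eq_or_lt with heq | hlt
  · exact orbitSum_mem_adjoin_invGens_of_add_eq (by omega)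
  have h2le : 2 * (q - 1) ≤ a₁ + a₂ := by
    have := Nat.le_of_dvd (by omega) (Nat.dvd_sub hdvd dvd_rfl)
    omega
  -- `x₁^k x₂^l` with `k = min a₁ (q - 1)` divides `x₁^a₁ x₂^a₂`, so `B_k` can be split off
  obtain ⟨k, l, c₁, c₂, rfl, rfl, hkl⟩ :
      ∃ k l c₁ c₂, a₁ = k + c₁ ∧ a₂ = l + c₂ ∧ k + l = q - 1 :=
    ⟨min a₁ (q - 1), q - 1 - min a₁ (q - 1), a₁ - min a₁ (q - 1),
      a₂ - (q - 1 - min a₁ (q - 1)), by omega, by omega, by omega⟩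
  have hc : q - 1 ∣ c₁ + c₂ := by
    rw [← Nat.dvd_add_right (hkl ▸ dvd_rfl : q - 1 ∣ k + l)]
    convert hdvd using 1; ring
  have key := orbitSum_mul_orbitSum (R := R) k l 0 0 c₁ c₂ 0 0
  simp only [add_zero, zero_add] at key
  rw [eq_sub_of_add_eq key.symm]
  refine sub_mem (mul_mem (orbitSum_mem_adjoin_invGens_of_add_eq (by omega))
    (ih _ _ _ _ ?_ (Nat.modEq_zero_iff_dvd.mpr hc))) (ih _ _ _ _ ?_ ?_)
  · grind [orbitSumRank]
  · grind [orbitSumRank]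
  · exact (Nat.modEq_zero_iff_dvd.mpr (hkl ▸ dvd_rfl)).trans
      (Nat.modEq_zero_iff_dvd.mpr hc).symm

theorem orbitSum_cross_mem_adjoin_invGens {a b : ℕ} (hab : a ≡ b [MOD q - 1])
    (ih : ∀ c₁ c₂ d₁ d₂, orbitSumRank c₁ c₂ d₁ d₂ < orbitSumRank (a + 1) 0 0 (b + 1) →
      c₁ + c₂ ≡ d₁ + d₂ [MOD q - 1] → orbitSum c₁ c₂ d₁ d₂ ∈ adjoin R (invGens R q)) :
    orbitSum (a + 1) 0 0 (b + 1) ∈ adjoin R (invGens R q) := by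
  by_cases h0 : a = 0 ∧ b = 0
  · obtain ⟨rfl, rfl⟩ := h0
    exact orbitSum_one_zero_zero_one_mem_adjoin_invGens
  have key := orbitSum_mul_orbitSum (R := R) 1 0 0 1 a 0 0 b
  simp only [add_zero, zero_add] at key
  rw [add_comm 1 a, add_comm 1 b] at key
  rw [eq_sub_of_add_eq key.symm]
  refine sub_mem (mul_mem orbitSum_one_zero_zero_one_mem_adjoin_invGens
    (ih _ _ _ _ ?_ (by simpa using hab))) (ih _ _ _ _ ?_ ?_)
  · grind [orbitSumRank]
  · grind [orbitSumRank]
  · rw [add_comm]; exact Nat.ModEq.add_right 1 hab.symm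

theorem orbitSum_mem_adjoin_invGens (a₁ a₂ b₁ b₂ : ℕ) (h : a₁ + a₂ ≡ b₁ + b₂ [MOD q - 1]) :
    orbitSum a₁ a₂ b₁ b₂ ∈ adjoin R (invGens R q) := by
  have ih : ∀ c₁ c₂ d₁ d₂, orbitSumRank c₁ c₂ d₁ d₂ < orbitSumRank a₁ a₂ b₁ b₂ →
      c₁ + c₂ ≡ d₁ + d₂ [MOD q - 1] → orbitSum c₁ c₂ d₁ d₂ ∈ adjoin R (invGens R q) :=
    fun c₁ c₂ d₁ d₂ _ h => orbitSum_mem_adjoin_invGens c₁ c₂ d₁ d₂ h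
  match a₁, a₂, b₁, b₂, h, ih with
  | a₁ + 1, a₂, b₁ + 1, b₂, h, _ =>
    rw [orbitSum_add_one_add_one_fst]
    refine mul_mem X0_mul_X2_mem_adjoin_invGens (orbitSum_mem_adjoin_invGens _ _ _ _ ?_)
    exact Nat.ModEq.add_right_cancel' 1 (by convert h using 1 <;> ring)
  | a₁, a₂ + 1, b₁, b₂ + 1, h, _ =>
    rw [orbitSum_add_one_add_one_snd]
    exact mul_mem X1_mul_X3_mem_adjoin_invGens
      (orbitSum_mem_adjoin_invGens _ _ _ _ (Nat.ModEq.add_right_cancel' 1 h))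
  | a₁, a₂, 0, 0, h, ih =>
    exact orbitSum_pure_mem_adjoin_invGens (Nat.modEq_zero_iff_dvd.mp h) ih
  | 0, 0, b₁, b₂, h, ih =>
    rw [← orbitSum_comm]
    exact orbitSum_pure_mem_adjoin_invGens (Nat.modEq_zero_iff_dvd.mp h.symm)
      (by simpa only [orbitSumRank_comm] using ih)
  | a + 1, 0, 0, b + 1, h, ih =>
    exact orbitSum_cross_mem_adjoin_invGens (Nat.ModEq.add_right_cancel' 1 (by simpa using h)) ih
  | 0, a + 1, b + 1, 0, h, ih =>
    rw [← orbitSum_comm]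
    exact orbitSum_cross_mem_adjoin_invGens
      (Nat.ModEq.add_right_cancel' 1 (by simpa using h.symm))
      (by simpa only [orbitSumRank_comm] using ih)
termination_by orbitSumRank a₁ a₂ b₁ b₂
decreasing_by
  all_goals first | assumption | grind [orbitSumRank]

theorem monomial_eq_C_mul_xyMonomial (d : Fin 4 →₀ ℕ) (c : R) :
    monomial d c = C c * xyMonomial (d 0) (d 1) (d 2) (d 3) := by
  rw [monomial_eq, Finsupp.prod_fintype _ _ fun _ => pow_zero _, Fin.prod_univ_four, xyMonomial]

def swapIdx : Fin 4 → Fin 4 := ![2, 3, 0, 1]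

theorem swapIdx_injective : Function.Injective swapIdx := by decide

theorem monomial_mapDomain_swapIdx (d : Fin 4 →₀ ℕ) (c : R) :
    monomial (d.mapDomain swapIdx) c = C c * xyMonomial (d 2) (d 3) (d 0) (d 1) := by
  have h := Finsupp.mapDomain_apply swapIdx_injective d
  rw [monomial_eq_C_mul_xyMonomial, ← h 2, ← h 3, ← h 0, ← h 1]
  rfl

theorem sum_monomial_pair_mem_adjoin_invGens {d : Fin 4 →₀ ℕ}
    (hd : d 0 + d 1 ≡ d 2 + d 3 [MOD q - 1]) (c : R) :
    ∑ e ∈ {d, d.mapDomain swapIdx}, monomial e c ∈ adjoin R (invGens R q) := by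
  have hC : C c ∈ adjoin R (invGens R q) := Subalgebra.algebraMap_mem _ c
  by_cases hfix : d.mapDomain swapIdx = d
  · have h := Finsupp.mapDomain_apply swapIdx_injective d
    rw [hfix] at h
    have h02 : d 0 = d 2 := h 2
    have h13 : d 1 = d 3 := h 3
    rw [hfix, Finset.pair_eq_singleton, Finset.sum_singleton,
      monomial_eq_C_mul_xyMonomial, ← h02, ← h13, xyMonomial_self]
    exact mul_mem hC (mul_mem (pow_mem X0_mul_X2_mem_adjoin_invGens _)
      (pow_mem X1_mul_X3_mem_adjoin_invGens _))
  · rw [Finset.sum_pair (Ne.symm hfix), monomial_eq_C_mul_xyMonomial,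
      monomial_mapDomain_swapIdx, ← mul_add]
    exact mul_mem hC (orbitSum_mem_adjoin_invGens _ _ _ _ hd)

theorem support_sub_sum_monomial_pair_subset {f : MvPolynomial (Fin 4) R}
    (hf : ∀ d, coeff (d.mapDomain swapIdx) f = coeff d f) (d : Fin 4 →₀ ℕ) :
    (f - ∑ e ∈ {d, d.mapDomain swapIdx}, monomial e (coeff d f)).support ⊆
      f.support.erase d := by
  intro e he
  rw [mem_support_iff, coeff_sub, coeff_sum] at he
  simp only [coeff_monomial, Finset.sum_ite_eq'] at he
  split_ifs at he with hmem
  · exfalso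
    rcases Finset.mem_insert.mp hmem with rfl | he'
    · exact he (sub_self _)
    · rw [Finset.mem_singleton.mp he', hf, sub_self] at he
      exact he rfl
  · refine Finset.mem_erase.mpr ⟨fun hed => hmem (hed ▸ Finset.mem_insert_self _ _), ?_⟩
    rwa [sub_zero, ← mem_support_iff] at he

end OrbitSums

section Invariants

variable {F : Type*} [Field F]

noncomputable def swapXY : MvPolynomial (Fin 4) F →ₐ[F] MvPolynomial (Fin 4) F :=
  aeval ![X 2, X 3, X 0, X 1]

noncomputable def scaleXY (a : Fˣ) : MvPolynomial (Fin 4) F →ₐ[F] MvPolynomial (Fin 4) F :=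
  aeval ![C ((a : F)⁻¹) * X 0, C ((a : F)⁻¹) * X 1, C (a : F) * X 2, C (a : F) * X 3]

variable (F) in
noncomputable def invariants : Subalgebra F (MvPolynomial (Fin 4) F) :=
  AlgHom.equalizer swapXY (AlgHom.id F _) ⊓
    ⨅ a : Fˣ, AlgHom.equalizer (scaleXY a) (AlgHom.id F _)

theorem mem_invariants {f : MvPolynomial (Fin 4) F} :
    f ∈ invariants F ↔ swapXY f = f ∧ ∀ a : Fˣ, scaleXY a f = f := by
  simp [invariants, AlgHom.mem_equalizer]

theorem swapXY_eq_rename : (swapXY : MvPolynomial (Fin 4) F →ₐ[F] _) = rename swapIdx := by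
  refine algHom_ext fun i => ?_
  fin_cases i <;> simp [swapXY, swapIdx]

theorem swapXY_xyMonomial (a₁ a₂ b₁ b₂ : ℕ) :
    swapXY (xyMonomial a₁ a₂ b₁ b₂ : MvPolynomial (Fin 4) F) = xyMonomial b₁ b₂ a₁ a₂ := by
  simp [swapXY, xyMonomial]; ring

theorem scaleXY_xyMonomial (a : Fˣ) (a₁ a₂ b₁ b₂ : ℕ) :
    scaleXY a (xyMonomial a₁ a₂ b₁ b₂ : MvPolynomial (Fin 4) F) =
      C ((a : F)⁻¹ ^ (a₁ + a₂) * (a : F) ^ (b₁ + b₂)) * xyMonomial a₁ a₂ b₁ b₂ := by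
  simp only [scaleXY, xyMonomial, map_mul, map_pow, aeval_X, pow_add, Matrix.cons_val]
  ring

theorem coeff_scaleXY (a : Fˣ) (f : MvPolynomial (Fin 4) F) (d : Fin 4 →₀ ℕ) :
    coeff d (scaleXY a f) = (a : F)⁻¹ ^ (d 0 + d 1) * (a : F) ^ (d 2 + d 3) * coeff d f := by
  induction f using MvPolynomial.induction_on' with
  | monomial e c =>
    rw [monomial_eq_C_mul_xyMonomial, map_mul, scaleXY_xyMonomial, scaleXY, aeval_C,
      algebraMap_eq, ← mul_assoc, ← C_mul, ← monomial_eq_C_mul_xyMonomial,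
      ← monomial_eq_C_mul_xyMonomial, coeff_monomial, coeff_monomial]
    split_ifs with h
    · subst h; ring
    · simp
  | add p q hp hq => rw [map_add, coeff_add, coeff_add, hp, hq, mul_add]

theorem coeff_mapDomain_swapIdx {f : MvPolynomial (Fin 4) F} (hf : swapXY f = f)
    (d : Fin 4 →₀ ℕ) : coeff (d.mapDomain swapIdx) f = coeff d f := by
  conv_lhs => rw [← hf, swapXY_eq_rename]
  exact coeff_rename_mapDomain _ swapIdx_injective f d

variable [Fintype F]

theorem forall_units_pow_eq_pow_iff {m n : ℕ} :
    (∀ a : Fˣ, (a : F) ^ m = (a : F) ^ n) ↔ m ≡ n [MOD Fintype.card F - 1] := by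
  rw [← Nat.card_eq_fintype_card, ← Nat.card_units]
  constructor
  · intro h
    obtain ⟨g, hg⟩ := IsCyclic.exists_generator (α := Fˣ)
    rw [← orderOf_eq_card_of_forall_mem_zpowers hg]
    exact pow_eq_pow_iff_modEq.mp (Units.ext (h g))
  · exact fun h a =>
      congrArg Units.val (pow_eq_pow_iff_modEq.mpr (h.of_dvd (orderOf_dvd_natCard a)))

theorem scaleXY_xyMonomial_of_modEq (a : Fˣ) {a₁ a₂ b₁ b₂ : ℕ}
    (h : a₁ + a₂ ≡ b₁ + b₂ [MOD Fintype.card F - 1]) :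
    scaleXY a (xyMonomial a₁ a₂ b₁ b₂ : MvPolynomial (Fin 4) F) = xyMonomial a₁ a₂ b₁ b₂ := by
  rw [scaleXY_xyMonomial, inv_pow, forall_units_pow_eq_pow_iff.mpr h a,
    inv_mul_cancel₀ (pow_ne_zero _ a.ne_zero), C_1, one_mul]

theorem orbitSum_mem_invariants {a₁ a₂ b₁ b₂ : ℕ}
    (h : a₁ + a₂ ≡ b₁ + b₂ [MOD Fintype.card F - 1]) :
    orbitSum a₁ a₂ b₁ b₂ ∈ invariants F := by
  refine mem_invariants.mpr ⟨?_, fun a => ?_⟩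
  · rw [orbitSum, map_add, swapXY_xyMonomial, swapXY_xyMonomial, add_comm]
  · rw [orbitSum, map_add, scaleXY_xyMonomial_of_modEq a h,
      scaleXY_xyMonomial_of_modEq a h.symm]

theorem xyMonomial_self_mem_invariants (a b : ℕ) :
    xyMonomial a b a b ∈ invariants F :=
  mem_invariants.mpr ⟨swapXY_xyMonomial a b a b, fun u => scaleXY_xyMonomial_of_modEq u rfl⟩

theorem adjoin_invGens_le_invariants :
    adjoin F (invGens F (Fintype.card F)) ≤ invariants F := by
  refine adjoin_le ?_
  rintro _ (rfl | rfl | rfl | ⟨k, rfl⟩) <;> rw [SetLike.mem_coe]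
  · simpa [xyMonomial_self] using xyMonomial_self_mem_invariants (F := F) 1 0
  · simpa [xyMonomial_self] using xyMonomial_self_mem_invariants (F := F) 0 1
  · exact orbitSum_one_zero_zero_one (R := F) ▸ orbitSum_mem_invariants rfl
  · dsimp only
    rw [← orbitSum_pure]
    refine orbitSum_mem_invariants (Nat.modEq_zero_iff_dvd.mpr ?_)
    rw [Nat.add_sub_cancel' (by omega)]

theorem modEq_of_mem_support {f : MvPolynomial (Fin 4) F} (hf : ∀ a : Fˣ, scaleXY a f = f)
    {d : Fin 4 →₀ ℕ} (hd : d ∈ f.support) :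
    d 0 + d 1 ≡ d 2 + d 3 [MOD Fintype.card F - 1] := by
  refine forall_units_pow_eq_pow_iff.mp fun a => ?_
  have h := coeff_scaleXY a f d
  rw [hf a] at h
  have h1 : (a : F)⁻¹ ^ (d 0 + d 1) * (a : F) ^ (d 2 + d 3) = 1 :=
    mul_right_cancel₀ (mem_support_iff.mp hd) (by rw [one_mul]; exact h.symm)
  rwa [inv_pow, inv_mul_eq_one₀ (pow_ne_zero _ a.ne_zero)] at h1

theorem invariants_le_adjoin_invGens :
    invariants F ≤ adjoin F (invGens F (Fintype.card F)) := by
  intro f hf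
  induction hs : f.support using Finset.strongInduction generalizing f with
  | H s ih =>
  obtain ⟨hσ, hτ⟩ := mem_invariants.mp hf
  rcases f.support.eq_empty_or_nonempty with h0 | ⟨d, hd⟩
  · rw [support_eq_empty.mp h0]; exact zero_mem _
  set P := ∑ e ∈ {d, d.mapDomain swapIdx}, monomial e (coeff d f)
  have hP : P ∈ adjoin F (invGens F (Fintype.card F)) :=
    sum_monomial_pair_mem_adjoin_invGens (modEq_of_mem_support hτ hd) _
  have hlt : (f - P).support ⊂ s := hs ▸
    (support_sub_sum_monomial_pair_subset (coeff_mapDomain_swapIdx hσ) d).trans_ssubset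
      (Finset.erase_ssubset hd)
  have hg := ih _ hlt (sub_mem hf (adjoin_invGens_le_invariants hP)) rfl
  simpa using add_mem hg hP

theorem invariants_eq_adjoin_invGens :
    invariants F = adjoin F (invGens F (Fintype.card F)) :=
  le_antisymm invariants_le_adjoin_invGens adjoin_invGens_le_invariants

end Invariants

end O2PlusInvariants

theorem two_vector_invariants_general (F : Type*) [Field F] [Fintype F]
    (f : MvPolynomial (Fin 4) F) :
    (aeval (R := F) (![X 2, X 3, X 0, X 1] : Fin 4 → MvPolynomial (Fin 4) F) f = f ∧
        ∀ a : Fˣ,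
          aeval (R := F)
            (![C ((a : F)⁻¹) * X 0, C ((a : F)⁻¹) * X 1,
               C ((a : F)) * X 2, C ((a : F)) * X 3] : Fin 4 → MvPolynomial (Fin 4) F) f = f) ↔
      f ∈ Algebra.adjoin F
        (insert (X 0 * X 2) (insert (X 1 * X 3) (insert (X 0 * X 3 + X 1 * X 2)
          (Set.range fun k : Fin (Fintype.card F) =>
            X 0 ^ (k : ℕ) * X 1 ^ (Fintype.card F - 1 - (k : ℕ)) +
              X 2 ^ (k : ℕ) * X 3 ^ (Fintype.card F - 1 - (k : ℕ)))))) :=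
  O2PlusInvariants.mem_invariants.symm.trans
    (SetLike.ext_iff.mp O2PlusInvariants.invariants_eq_adjoin_invGens f)

/-- Over `F_q` of characteristic 2 with `q ≥ 4`, a polynomial
`f ∈ F_q[x₁,x₂,y₁,y₂]` is `O₂⁺(F_q)`-invariant (invariant under the swap
`σ : x_i ↔ y_i` and all `τ_a : x_i ↦ a⁻¹x_i, y_i ↦ a·y_i`) if and only if `f`
lies in the `F_q`-subalgebra generated by `N₁ = x₁y₁`, `N₂ = x₂y₂`,
`U₁₂ = x₁y₂ + x₂y₁` and `B_k = x₁^k x₂^{q-1-k} + y₁^k y₂^{q-1-k}` for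
`0 ≤ k ≤ q-1`.  Here `x₁ = X 0`, `x₂ = X 1`, `y₁ = X 2`, `y₂ = X 3`. -/
theorem two_vector_invariants (F : Type*) [Field F] [Fintype F] [DecidableEq F]
    (hchar : ringChar F = 2) (h4 : 4 ≤ Fintype.card F)
    (f : MvPolynomial (Fin 4) F) :
    (aeval (R := F) (![X 2, X 3, X 0, X 1] : Fin 4 → MvPolynomial (Fin 4) F) f = f ∧
        ∀ a : Fˣ,
          aeval (R := F)
            (![C ((a : F)⁻¹) * X 0, C ((a : F)⁻¹) * X 1,
               C ((a : F)) * X 2, C ((a : F)) * X 3] : Fin 4 → MvPolynomial (Fin 4) F) f = f) ↔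
      f ∈ Algebra.adjoin F
        (insert (X 0 * X 2) (insert (X 1 * X 3) (insert (X 0 * X 3 + X 1 * X 2)
          (Set.range fun k : Fin (Fintype.card F) =>
            X 0 ^ (k : ℕ) * X 1 ^ (Fintype.card F - 1 - (k : ℕ)) +
              X 2 ^ (k : ℕ) * X 3 ^ (Fintype.card F - 1 - (k : ℕ)))))) :=
  two_vector_invariants_general F f
end
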